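/- arXiv:math/0304077 — 6 statements merged into one kernel-verified Lean document; each statement's English description precedes it below -/
import Mathlib

section
/- Let A, A* be a Leonard pair in Mat_{d+1}(K) with A lower triangular and A*_{ij} = 0 whenever j - i > 1. Then A*_{j-1,j} ≠ 0 for 1 ≤ j ≤ d. -/
/-!
As `A` is lower triangular and multiplicity-free, its diagonal lists the eigenvalues in some
order: `A (σ m) (σ m) = θ m`. The primitive idempotent `E_i = ∏_{m ≠ i} (A - θ m) / (θ i - θ m)`
is then supported on rows `≥ σ i` and columns `≤ σ i`, because the factors belonging to the
diagonal entries on the other side kill those rows (resp. columns) one at a time.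
If `A*_{j-1,j} = 0`, then `A*` preserves the span of the basis vectors `e_c`, `c ≥ j`, so
`E_x A* E_y = 0` whenever `σ x < j ≤ σ y`. The Leonard condition `E_k A* E_{k±1} ≠ 0` thus forces
`j ≤ σ k ↔ j ≤ σ (k + 1)` for every `k`, which is absurd since `σ⁻¹ j` and `σ⁻¹ (j - 1)` lie on
opposite sides of `j`.
-/

open Polynomial Matrix Finset

variable {K : Type*} [Field K]

/-- The primitive idempotent of `A` associated with eigenvalue `θ i`:
`E i = ∏_{j ≠ i} (A - θ j • 1) / (θ i - θ j)`. -/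
noncomputable def primIdem {d : ℕ} (A : Matrix (Fin (d + 1)) (Fin (d + 1)) K)
    (θ : Fin (d + 1) → K) (i : Fin (d + 1)) : Matrix (Fin (d + 1)) (Fin (d + 1)) K :=
  Polynomial.aeval A
    (∏ j ∈ Finset.univ.erase i,
      (Polynomial.C (θ i - θ j)⁻¹ * (Polynomial.X - Polynomial.C (θ j))))

/-- `A` is multiplicity-free with (distinct) eigenvalues `θ 0, …, θ d`. -/
def MultFreeWith {d : ℕ} (A : Matrix (Fin (d + 1)) (Fin (d + 1)) K)
    (θ : Fin (d + 1) → K) : Prop :=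
  Function.Injective θ ∧ A.charpoly = ∏ i, (Polynomial.X - Polynomial.C (θ i))

/-- `θ` is an eigenvalue sequence for the (ordered) pair `A, B`: the corresponding
ordering of the primitive idempotents of `A` is an idempotent sequence for `A, B`. -/
def IsEigenvalueSeq {d : ℕ} (A B : Matrix (Fin (d + 1)) (Fin (d + 1)) K)
    (θ : Fin (d + 1) → K) : Prop :=
  MultFreeWith A θ ∧
    ∀ i j : Fin (d + 1),
      (1 < |((i : ℕ) : ℤ) - ((j : ℕ) : ℤ)| → primIdem A θ i * B * primIdem A θ j = 0) ∧
      (|((i : ℕ) : ℤ) - ((j : ℕ) : ℤ)| = 1 → primIdem A θ i * B * primIdem A θ j ≠ 0)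

/-- `A, B` is a Leonard pair in `Mat_{d+1}(K)`. -/
def IsLeonardPair {d : ℕ} (A B : Matrix (Fin (d + 1)) (Fin (d + 1)) K) : Prop :=
  (∃ θ, IsEigenvalueSeq A B θ) ∧ (∃ θs, IsEigenvalueSeq B A θs)

section Triangular

variable {ι : Type*} [Fintype ι] [LinearOrder ι] {A : Matrix ι ι K}

theorem Matrix.IsLowerTriangular.charpoly_eq (hA : A.IsLowerTriangular) :
    A.charpoly = ∏ p, (X - C (A p p)) := by
  rw [← charpoly_transpose, charpoly_of_isUpperTriangular Aᵀ fun _ _ h => hA h]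
  rfl

theorem Matrix.IsLowerTriangular.aeval_row_eq_zero_of_dvd (hA : A.IsLowerTriangular)
    (r : ι) {q : K[X]} (hq : (∏ p ∈ univ.filter (· ≤ r), (X - C (A p p))) ∣ q) (c : ι) :
    aeval A q r c = 0 := by
  induction r using WellFoundedLT.induction generalizing q c with
  | _ r ih =>
  obtain ⟨q', rfl⟩ := hq
  have hsplit : univ.filter (· ≤ r) = insert r (univ.filter (· < r)) := by
    ext p
    simp [le_iff_lt_or_eq, or_comm]
  rw [hsplit, prod_insert (by simp), mul_assoc, map_mul, mul_apply]
  refine sum_eq_zero fun p _ => ?_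
  rcases lt_trichotomy p r with hpr | rfl | hrp
  · rw [ih p hpr _ c, mul_zero]
    refine dvd_mul_of_dvd_left (prod_dvd_prod_of_subset _ _ _ fun x hx => ?_) _
    simp only [mem_filter, mem_univ, true_and] at hx ⊢
    exact hx.trans_lt hpr
  · simp [algebraMap_matrix_apply]
  · simp [algebraMap_matrix_apply, hA hrp, hrp.ne]

theorem Matrix.aeval_transpose {n : Type*} [Fintype n] [DecidableEq n] (M : Matrix n n K)
    (q : K[X]) : aeval Mᵀ q = (aeval M q)ᵀ := by
  induction q using Polynomial.induction_on' with
  | add p q hp hq => simp [hp, hq]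
  | monomial n a =>
    simpa [transpose_pow, algebraMap_eq_diagonal] using Algebra.commutes a (Mᵀ ^ n)

theorem Matrix.IsLowerTriangular.aeval_col_eq_zero_of_dvd (hA : A.IsLowerTriangular)
    (c : ι) {q : K[X]} (hq : (∏ p ∈ univ.filter (c ≤ ·), (X - C (A p p))) ∣ q) (r : ι) :
    aeval A q r c = 0 := by
  have hAt : (Aᵀ : Matrix ιᵒᵈ ιᵒᵈ K).IsLowerTriangular := fun _ _ h => hA h
  have := hAt.aeval_row_eq_zero_of_dvd (OrderDual.toDual c) hq r
  change (aeval (Aᵀ : Matrix ι ι K) q) c r = 0 at this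
  rwa [aeval_transpose] at this

end Triangular

theorem Matrix.mul_mul_eq_zero_of_apply_eq_zero {l m n o R : Type*} [Fintype m] [Fintype n]
    [NonUnitalNonAssocSemiring R] {M : Matrix l m R} {N : Matrix m n R} {P : Matrix n o R}
    {s : Set m} {t : Set n} (hM : ∀ a p, p ∈ s → M a p = 0)
    (hN : ∀ p q, p ∉ s → q ∈ t → N p q = 0) (hP : ∀ q c, q ∉ t → P q c = 0) :
    M * N * P = 0 := by
  ext a c
  rw [mul_apply, zero_apply]
  refine sum_eq_zero fun q _ => ?_
  by_cases hq : q ∈ t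
  · rw [mul_apply, sum_eq_zero fun p _ => ?_, zero_mul]
    by_cases hp : p ∈ s
    · rw [hM a p hp, zero_mul]
    · rw [hN p q hp hq, mul_zero]
  · rw [hP q c hq, mul_zero]

theorem Fin.iff_of_forall_castSucc_iff_succ {n : ℕ} {P : Fin (n + 1) → Prop}
    (h : ∀ k : Fin n, P k.castSucc ↔ P k.succ) (a b : Fin (n + 1)) : P a ↔ P b := by
  have hP : ∀ i, P i ↔ P 0 := fun i => Fin.induction Iff.rfl (fun k hk => (h k).symm.trans hk) i
  rw [hP a, hP b]

section PrimIdem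

variable {d : ℕ} {A : Matrix (Fin (d + 1)) (Fin (d + 1)) K} {θ : Fin (d + 1) → K}

theorem MultFreeWith.exists_equiv_diag_eq (hA : A.IsLowerTriangular) (hθ : MultFreeWith A θ) :
    ∃ σ : Fin (d + 1) ≃ Fin (d + 1), ∀ m, A (σ m) (σ m) = θ m := by
  have hroot : ∀ m, ∃ p, A p p = θ m := fun m => by
    have : (∏ p, (X - C (A p p))).IsRoot (θ m) := by
      rw [← hA.charpoly_eq, hθ.2, isRoot_prod]
      exact ⟨m, mem_univ m, root_X_sub_C.mpr rfl⟩
    obtain ⟨p, -, hp⟩ := (isRoot_prod _ _ _).mp this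
    exact ⟨p, root_X_sub_C.mp hp⟩
  choose σ hσ using hroot
  have hinj : Function.Injective σ := fun a b h => hθ.1 (by rw [← hσ a, ← hσ b, h])
  exact ⟨Equiv.ofBijective σ (Finite.injective_iff_bijective.mp hinj), hσ⟩

variable {σ : Fin (d + 1) ≃ Fin (d + 1)}

theorem prod_X_sub_C_diag_dvd (hσ : ∀ m, A (σ m) (σ m) = θ m) {i : Fin (d + 1)}
    {S : Finset (Fin (d + 1))} (hS : σ i ∉ S) :
    (∏ p ∈ S, (X - C (A p p))) ∣
      ∏ m ∈ univ.erase i, (C (θ i - θ m)⁻¹ * (X - C (θ m))) := by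
  have hS' : ∏ p ∈ S, (X - C (A p p)) = ∏ m ∈ S.map σ.symm.toEmbedding, (X - C (θ m)) := by
    rw [prod_map]
    exact prod_congr rfl fun p _ => by simp [← hσ]
  rw [hS', prod_mul_distrib]
  refine dvd_mul_of_dvd_right (prod_dvd_prod_of_subset _ _ _ fun m hm => ?_) _
  obtain ⟨p, hp, rfl⟩ := mem_map.mp hm
  refine mem_erase.mpr ⟨fun h => hS ?_, mem_univ _⟩
  simpa [← h] using hp

theorem primIdem_apply_eq_zero_of_lt (hA : A.IsLowerTriangular) (hσ : ∀ m, A (σ m) (σ m) = θ m)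
    {i r : Fin (d + 1)} (hr : r < σ i) (c : Fin (d + 1)) : primIdem A θ i r c = 0 :=
  hA.aeval_row_eq_zero_of_dvd r (prod_X_sub_C_diag_dvd hσ (by simpa using hr)) c

theorem primIdem_apply_eq_zero_of_gt (hA : A.IsLowerTriangular) (hσ : ∀ m, A (σ m) (σ m) = θ m)
    {i c : Fin (d + 1)} (hc : σ i < c) (r : Fin (d + 1)) : primIdem A θ i r c = 0 :=
  hA.aeval_col_eq_zero_of_dvd c (prod_X_sub_C_diag_dvd hσ (by simpa using hc)) r

theorem primIdem_mul_mul_primIdem_eq_zero (hA : A.IsLowerTriangular)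
    (hσ : ∀ m, A (σ m) (σ m) = θ m) {B : Matrix (Fin (d + 1)) (Fin (d + 1)) K} {j : ℕ}
    (hB : ∀ p q : Fin (d + 1), (p : ℕ) < j → j ≤ (q : ℕ) → B p q = 0) {x y : Fin (d + 1)}
    (hx : (σ x : ℕ) < j) (hy : j ≤ (σ y : ℕ)) : primIdem A θ x * B * primIdem A θ y = 0 :=
  mul_mul_eq_zero_of_apply_eq_zero (s := {c | j ≤ (c : ℕ)}) (t := {c | j ≤ (c : ℕ)})
    (fun _ _ hc => primIdem_apply_eq_zero_of_gt hA hσ (Fin.lt_def.mpr (hx.trans_le hc)) _)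
    (fun p q hp hq => hB p q (not_le.mp hp) hq)
    (fun _ _ hr =>
      primIdem_apply_eq_zero_of_lt hA hσ (Fin.lt_def.mpr ((not_le.mp hr).trans_le hy)) _)

end PrimIdem

theorem superdiag_ne_zero {d : ℕ} (A Astar : Matrix (Fin (d + 1)) (Fin (d + 1)) K)
    (hLP : IsLeonardPair A Astar)
    (hA : ∀ i j : Fin (d + 1), (i : ℕ) < (j : ℕ) → A i j = 0)
    (hAs : ∀ i j : Fin (d + 1), (i : ℕ) + 1 < (j : ℕ) → Astar i j = 0) :
    ∀ j : ℕ, ∀ _ : 1 ≤ j, ∀ _ : j ≤ d,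
      Astar ⟨j - 1, by omega⟩ ⟨j, by omega⟩ ≠ 0 := by
  intro j hj1 hjd hzero
  obtain ⟨⟨θ, hθ, hE⟩, -⟩ := hLP
  have hlow : A.IsLowerTriangular := fun p q h => hA p q h
  obtain ⟨σ, hσ⟩ := hθ.exists_equiv_diag_eq hlow
  have hinv : ∀ p q : Fin (d + 1), (p : ℕ) < j → j ≤ (q : ℕ) → Astar p q = 0 := by
    intro p q hp hq
    rcases Nat.lt_or_ge ((p : ℕ) + 1) q with h | h
    · exact hAs p q h
    · convert hzero using 2 <;> ext <;> simp <;> omega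
  have hstep : ∀ k : Fin d, j ≤ (σ k.castSucc : ℕ) ↔ j ≤ (σ k.succ : ℕ) := fun k => by
    have hadj : |((k.succ : ℕ) : ℤ) - ((k.castSucc : ℕ) : ℤ)| = 1 := by simp
    have hadj' : |((k.castSucc : ℕ) : ℤ) - ((k.succ : ℕ) : ℤ)| = 1 := by simp
    constructor <;> intro h <;> by_contra h'
    · exact (hE _ _).2 hadj (primIdem_mul_mul_primIdem_eq_zero hlow hσ hinv (not_le.mp h') h)
    · exact (hE _ _).2 hadj' (primIdem_mul_mul_primIdem_eq_zero hlow hσ hinv (not_le.mp h') h)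
  have hsame := Fin.iff_of_forall_castSucc_iff_succ (P := fun i => j ≤ (σ i : ℕ)) hstep
    (σ.symm ⟨j, by omega⟩) (σ.symm ⟨j - 1, by omega⟩)
  simp only [Equiv.apply_symm_apply, le_refl, true_iff] at hsame
  omega
end

section
/- Let A, A* be a Leonard pair in Mat_{d+1}(K) with A lower triangular and A*_{ij} = 0 whenever j - i > 1. Let E_i denote the primitive idempotent of A for the eigenvalue A_{ii}. Then E_i A* E_j = 0 whenever j - i > 1; consequently E_0, E_1, ..., E_d is an idempotent sequence for A, A*. -/
/-!
Since `A` is lower triangular, `E i = ∏_{j ≠ i} (A - A j j) / (A i i - A j j)` vanishes outside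
rows `≥ i` and columns `≤ i`; as `A*` vanishes above its superdiagonal, only entries `A* k l` with
`k ≤ i < j ≤ l` could contribute to `E i A* E j`, and none does when `j > i + 1`.

The Leonard pair provides an idempotent sequence `E' 0, …, E' d`. Both orderings list the
eigenvalues of `A`, so `E i = E' (e i)` for a permutation `e`. By the vanishing above, `e⁻¹`
maps neighbours `|a - b| = 1` to neighbours; a permutation of a finite set has finite order, so
`e`, being a power of `e⁻¹`, does too, and the relabelled sequence `E' ∘ e` is again an
idempotent sequence.
-/

open Polynomial Matrix Finset

variable {K : Type*} [Field K]

namespace Matrix.IsLowerTriangular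

variable {n R : Type*} [Fintype n] [LinearOrder n] [DecidableEq n] [CommRing R]
  {A : Matrix n n R}

theorem aeval_X_sub_C_diag_apply_eq_zero_of_le (hA : A.IsLowerTriangular) {k r : n}
    (hkr : k ≤ r) : aeval A (X - C (A r r)) k r = 0 := by
  rcases hkr.lt_or_eq with hkr | rfl
  · simp [algebraMap_matrix_apply, hA hkr, hkr.ne]
  · simp [algebraMap_matrix_apply]

theorem aeval_X_sub_C_diag_apply_eq_zero_of_ge (hA : A.IsLowerTriangular) {r k : n}
    (hrk : r ≤ k) : aeval A (X - C (A r r)) r k = 0 := by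
  rcases hrk.lt_or_eq with hrk | rfl
  · simp [algebraMap_matrix_apply, hA hrk, hrk.ne]
  · simp [algebraMap_matrix_apply]

theorem aeval_prod_X_sub_C_diag_col_eq_zero (hA : A.IsLowerTriangular) {s : Finset n} {r : n}
    (hs : ∀ l, r ≤ l → l ∈ s) (p : n) :
    aeval A (∏ j ∈ s, (X - C (A j j))) p r = 0 := by
  induction s using Finset.strongInduction generalizing r p with
  | H s ih =>
  have hr : r ∈ s := hs r le_rfl
  rw [← Finset.mul_prod_erase s _ hr, mul_comm, map_mul, mul_apply]
  refine Finset.sum_eq_zero fun k _ => ?_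
  rcases lt_or_ge r k with hrk | hkr
  · rw [ih _ (erase_ssubset hr)
      (fun l hl => mem_erase.2 ⟨(hrk.trans_le hl).ne', hs l (hrk.le.trans hl)⟩), zero_mul]
  · rw [hA.aeval_X_sub_C_diag_apply_eq_zero_of_le hkr, mul_zero]

theorem aeval_prod_X_sub_C_diag_row_eq_zero (hA : A.IsLowerTriangular) {s : Finset n} {r : n}
    (hs : ∀ l, l ≤ r → l ∈ s) (q : n) :
    aeval A (∏ j ∈ s, (X - C (A j j))) r q = 0 := by
  induction s using Finset.strongInduction generalizing r q with
  | H s ih =>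
  have hr : r ∈ s := hs r le_rfl
  rw [← Finset.mul_prod_erase s _ hr, map_mul, mul_apply]
  refine Finset.sum_eq_zero fun k _ => ?_
  rcases lt_or_ge k r with hkr | hrk
  · rw [ih _ (erase_ssubset hr)
      (fun l hl => mem_erase.2 ⟨(hl.trans_lt hkr).ne, hs l (hl.trans hkr.le)⟩), mul_zero]
  · rw [hA.aeval_X_sub_C_diag_apply_eq_zero_of_ge hrk, zero_mul]

theorem charpoly_eq_prod_X_sub_C_diag (hA : A.IsLowerTriangular) :
    A.charpoly = ∏ i, (X - C (A i i)) := by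
  rw [← charpoly_transpose, charpoly_of_isUpperTriangular Aᵀ hA.transpose]
  rfl

end Matrix.IsLowerTriangular

theorem primIdem_eq_smul_aeval {d : ℕ} (A : Matrix (Fin (d + 1)) (Fin (d + 1)) K)
    (θ : Fin (d + 1) → K) (i : Fin (d + 1)) :
    primIdem A θ i = (∏ j ∈ univ.erase i, (θ i - θ j)⁻¹) •
      aeval A (∏ j ∈ univ.erase i, (X - C (θ j))) := by
  rw [primIdem, prod_mul_distrib, ← map_prod, map_mul, aeval_C,
    Algebra.algebraMap_eq_smul_one, smul_mul_assoc, one_mul]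

theorem primIdem_comp_perm {d : ℕ} (A : Matrix (Fin (d + 1)) (Fin (d + 1)) K)
    (θ : Fin (d + 1) → K) (e : Equiv.Perm (Fin (d + 1))) (i : Fin (d + 1)) :
    primIdem A (θ ∘ e) i = primIdem A θ (e i) := by
  unfold primIdem
  congr 1
  exact prod_equiv e (by simp) (by simp)

namespace Matrix.IsLowerTriangular

variable {d : ℕ} {A : Matrix (Fin (d + 1)) (Fin (d + 1)) K}

theorem primIdem_diag_col_eq_zero_of_lt (hA : A.IsLowerTriangular) {i r : Fin (d + 1)}
    (hir : i < r) (p : Fin (d + 1)) : primIdem A (fun k => A k k) i p r = 0 := by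
  rw [primIdem_eq_smul_aeval, smul_apply, hA.aeval_prod_X_sub_C_diag_col_eq_zero
    (fun l hl => mem_erase.2 ⟨(hir.trans_le hl).ne', mem_univ l⟩) p, smul_zero]

theorem primIdem_diag_row_eq_zero_of_lt (hA : A.IsLowerTriangular) {i r : Fin (d + 1)}
    (hri : r < i) (q : Fin (d + 1)) : primIdem A (fun k => A k k) i r q = 0 := by
  rw [primIdem_eq_smul_aeval, smul_apply, hA.aeval_prod_X_sub_C_diag_row_eq_zero
    (fun l hl => mem_erase.2 ⟨(hl.trans_lt hri).ne, mem_univ l⟩) q, smul_zero]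

theorem primIdem_diag_mul_mul_primIdem_diag_eq_zero (hA : A.IsLowerTriangular)
    {B : Matrix (Fin (d + 1)) (Fin (d + 1)) K}
    (hB : ∀ k l : Fin (d + 1), (k : ℕ) + 1 < (l : ℕ) → B k l = 0)
    {i j : Fin (d + 1)} (hij : (i : ℕ) + 1 < (j : ℕ)) :
    primIdem A (fun k => A k k) i * B * primIdem A (fun k => A k k) j = 0 := by
  ext p q
  rw [mul_apply, zero_apply]
  refine sum_eq_zero fun l _ => ?_
  rcases lt_or_ge l j with hlj | hjl
  · rw [hA.primIdem_diag_row_eq_zero_of_lt hlj, mul_zero]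
  · rw [mul_apply, sum_eq_zero, zero_mul]
    intro k _
    rcases lt_or_ge i k with hik | hki
    · rw [hA.primIdem_diag_col_eq_zero_of_lt hik, zero_mul]
    · rw [hB k l (by rw [Fin.le_def] at hki hjl; omega), mul_zero]

end Matrix.IsLowerTriangular

theorem Polynomial.roots_prod_univ_X_sub_C {ι R : Type*} [Fintype ι] [CommRing R] [IsDomain R]
    (f : ι → R) : (∏ i, (X - C (f i))).roots = univ.val.map f := by
  rw [prod_eq_multiset_prod, ← roots_multiset_prod_X_sub_C (univ.val.map f), Multiset.map_map]
  rfl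

theorem exists_perm_comp_eq_of_map_univ_eq {ι α : Type*} [Fintype ι] {f g : ι → α}
    (hg : Function.Injective g) (h : univ.val.map f = univ.val.map g) :
    ∃ e : Equiv.Perm ι, g ∘ e = f := by
  have hf : Function.Injective f := by
    rw [← Fintype.nodup_map_univ_iff_injective, h, Fintype.nodup_map_univ_iff_injective]
    exact hg
  have hrange : Set.range f = Set.range g := by
    ext x
    simpa using congrArg (x ∈ ·) h
  refine ⟨(Equiv.ofInjective f hf).trans ((Equiv.setCongr hrange).trans
    (Equiv.ofInjective g hg).symm), funext fun i => ?_⟩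
  simp [Equiv.apply_ofInjective_symm]

theorem Matrix.IsLowerTriangular.exists_perm_comp_eq_diag {d : ℕ}
    {A : Matrix (Fin (d + 1)) (Fin (d + 1)) K} (hA : A.IsLowerTriangular)
    {θ : Fin (d + 1) → K} (hθ : MultFreeWith A θ) :
    ∃ e : Equiv.Perm (Fin (d + 1)), θ ∘ e = fun k => A k k := by
  refine exists_perm_comp_eq_of_map_univ_eq hθ.1 ?_
  rw [← roots_prod_univ_X_sub_C, ← roots_prod_univ_X_sub_C, ← hθ.2,
    hA.charpoly_eq_prod_X_sub_C_diag]

theorem Equiv.Perm.rel_inv_apply_of_rel {V : Type*} [Finite V] {r : V → V → Prop}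
    (σ : Equiv.Perm V) (hσ : ∀ a b, r a b → r (σ a) (σ b)) {a b : V} (hab : r a b) :
    r (σ⁻¹ a) (σ⁻¹ b) := by
  obtain ⟨m, hm⟩ : σ⁻¹ ∈ Submonoid.powers σ :=
    mem_powers_iff_mem_zpowers.2 (inv_mem (Subgroup.mem_zpowers σ))
  have hpow : ∀ m : ℕ, r ((σ ^ m) a) ((σ ^ m) b) := fun m => by
    induction m with
    | zero => exact hab
    | succ m ih => simpa [pow_succ'] using hσ _ _ ih
  simpa [hm] using hpow m

theorem IsEigenvalueSeq.comp_perm {d : ℕ} {A B : Matrix (Fin (d + 1)) (Fin (d + 1)) K}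
    {θ : Fin (d + 1) → K} (h : IsEigenvalueSeq A B θ) (e : Equiv.Perm (Fin (d + 1)))
    (he : ∀ i j : Fin (d + 1),
      |((e i : ℕ) : ℤ) - ((e j : ℕ) : ℤ)| = 1 ↔ |((i : ℕ) : ℤ) - ((j : ℕ) : ℤ)| = 1) :
    IsEigenvalueSeq A B (θ ∘ e) := by
  refine ⟨⟨h.1.1.comp e.injective, ?_⟩, fun i j => ?_⟩
  · rw [h.1.2]
    exact (Equiv.prod_comp e fun i => X - C (θ i)).symm
  have one_lt_abs_iff : ∀ x : ℤ, 1 < |x| ↔ x ≠ 0 ∧ ¬|x| = 1 := fun x => by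
    rw [lt_abs, abs_eq (zero_le_one' ℤ)]
    omega
  have hfar : 1 < |((e i : ℕ) : ℤ) - ((e j : ℕ) : ℤ)| ↔ 1 < |((i : ℕ) : ℤ) - ((j : ℕ) : ℤ)| := by
    rw [one_lt_abs_iff, one_lt_abs_iff, he, sub_ne_zero, sub_ne_zero, Nat.cast_injective.ne_iff,
      Nat.cast_injective.ne_iff, Fin.val_injective.ne_iff, Fin.val_injective.ne_iff,
      e.injective.ne_iff]
  rw [primIdem_comp_perm, primIdem_comp_perm, ← hfar, ← he]
  exact h.2 (e i) (e j)

theorem idempotent_seq_of_lowerTriangular {d : ℕ}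
    (A Astar : Matrix (Fin (d + 1)) (Fin (d + 1)) K)
    (hLP : IsLeonardPair A Astar)
    (hA : ∀ i j : Fin (d + 1), (i : ℕ) < (j : ℕ) → A i j = 0)
    (hAs : ∀ i j : Fin (d + 1), (i : ℕ) + 1 < (j : ℕ) → Astar i j = 0) :
    (∀ i j : Fin (d + 1), (i : ℕ) + 1 < (j : ℕ) →
      primIdem A (fun k => A k k) i * Astar * primIdem A (fun k => A k k) j = 0) ∧
    IsEigenvalueSeq A Astar (fun k => A k k) := by
  have hAtri : A.IsLowerTriangular := fun i j h => hA i j h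
  have hzero (i j : Fin (d + 1)) (hij : (i : ℕ) + 1 < (j : ℕ)) :=
    hAtri.primIdem_diag_mul_mul_primIdem_diag_eq_zero hAs (i := i) (j := j) hij
  obtain ⟨⟨θ, hθ⟩, -⟩ := hLP
  obtain ⟨e, he⟩ := hAtri.exists_perm_comp_eq_diag hθ.1
  have hE i : primIdem A (fun k => A k k) i = primIdem A θ (e i) := by
    rw [← he, primIdem_comp_perm]
  have hreflect (i j : Fin (d + 1)) (hij : |((e i : ℕ) : ℤ) - ((e j : ℕ) : ℤ)| = 1) :
      |((i : ℕ) : ℤ) - ((j : ℕ) : ℤ)| = 1 := by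
    have not_far i j (hij : |((e i : ℕ) : ℤ) - ((e j : ℕ) : ℤ)| = 1) : ¬ (i : ℕ) + 1 < j :=
      fun hfar => (hθ.2 (e i) (e j)).2 hij (by rw [← hE, ← hE, hzero i j hfar])
    have hne : (i : ℕ) ≠ j := fun h => by simp [Fin.ext h] at hij
    have hij' := not_far i j hij
    have hji' := not_far j i (by rwa [abs_sub_comm])
    rw [abs_eq (zero_le_one' ℤ)]
    omega
  refine ⟨hzero, he ▸ hθ.comp_perm e fun i j => ⟨hreflect i j, fun hij => ?_⟩⟩
  simpa using (e⁻¹).rel_inv_apply_of_rel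
    (r := fun a b : Fin (d + 1) => |((a : ℕ) : ℤ) - ((b : ℕ) : ℤ)| = 1)
    (fun a b hab => hreflect _ _ (by simpa using hab)) hij
end

section
/- Let (θ_i, θ*_i, i=0..d; φ_j, φ'_j, j=1..d) be a parameter array over a field K with d ≥ 1. Then (θ_i - θ_{d-i})/(θ_0 - θ_d) = (θ*_i - θ*_{d-i})/(θ*_0 - θ*_d) for 0 ≤ i ≤ d. -/
open Finset

/-- A parameter array of diameter `d` over `K`:
scalars `θ 0,…,θ d`, `θs 0,…,θs d`, `φ 1,…,φ d`, `φp 1,…,φp d`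
satisfying conditions (i)–(v) of the classification theorem. -/
def IsParameterArray (K : Type*) [Field K] (d : ℕ) (θ θs φ φp : ℕ → K) : Prop :=
  (∀ i, 1 ≤ i → i ≤ d → φ i ≠ 0 ∧ φp i ≠ 0) ∧
  (∀ i j, i ≤ d → j ≤ d → i ≠ j → θ i ≠ θ j ∧ θs i ≠ θs j) ∧
  (∀ i, 1 ≤ i → i ≤ d →
    φ i = φp 1 * (∑ h ∈ Finset.range i, (θ h - θ (d - h)) / (θ 0 - θ d))
      + (θs i - θs 0) * (θ (i - 1) - θ d)) ∧
  (∀ i, 1 ≤ i → i ≤ d →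
    φp i = φ 1 * (∑ h ∈ Finset.range i, (θ h - θ (d - h)) / (θ 0 - θ d))
      + (θs i - θs 0) * (θ (d - i + 1) - θ 0)) ∧
  (∃ β : K, ∀ i, 2 ≤ i → i + 1 ≤ d →
    (θ (i - 2) - θ (i + 1)) / (θ (i - 1) - θ i) = β ∧
    (θs (i - 2) - θs (i + 1)) / (θs (i - 1) - θs i) = β)

/-!
Condition (v) says that `θ` and `θs` satisfy the same three-term recurrence
`x m - β x (m+1) + β x (m+2) - x (m+3) = 0`, so `x m - (β - 1) x (m+1) + x (m+2)` is constant in `m`.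
Hence `u i = θ i - θ (d - i)` and `us i = θs i - θs (d - i)` solve the same second-order recurrence
`u m + u (m+2) = (β - 1) u (m+1)`. Both are antisymmetric under `i ↦ d - i`, so on the
middle pair of indices each is determined by its value at `(d - 1) / 2`. A solution is determined
by two consecutive values, hence `us` is a multiple of `u` and `u i / u 0 = us i / us 0`.
-/

section

variable {K : Type*} [Field K]

def SatisfiesRecurrence (c : K) (d : ℕ) (x : ℕ → K) : Prop :=
  ∀ m, m + 2 ≤ d → x m + x (m + 2) = c * x (m + 1)

variable {d : ℕ}

namespace SatisfiesRecurrence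

variable {c : K} {x : ℕ → K}

theorem reverse (hx : SatisfiesRecurrence c d x) :
    SatisfiesRecurrence c d (fun i => x (d - i)) := by
  intro m hm
  have h := hx (d - m - 2) (by omega)
  rw [show d - m - 2 + 2 = d - m by omega, show d - m - 2 + 1 = d - (m + 1) by omega,
    show d - m - 2 = d - (m + 2) by omega] at h
  linear_combination h

theorem eq_zero_of_le (hx : SatisfiesRecurrence c d x) {k : ℕ} (h₀ : x k = 0)
    (h₁ : x (k + 1) = 0) : ∀ i, k ≤ i → i ≤ d → x i = 0 := by
  intro i
  induction i using Nat.strong_induction_on with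
  | _ i ih =>
    intro hki hid
    rcases (show i = k ∨ i = k + 1 ∨ k + 2 ≤ i by omega) with rfl | rfl | hi
    · exact h₀
    · exact h₁
    · obtain ⟨m, rfl⟩ : ∃ m, i = m + 2 := ⟨i - 2, by omega⟩
      have h := hx m hid
      rw [ih m (by omega) (by omega) (by omega), ih (m + 1) (by omega) (by omega) (by omega)] at h
      simpa using h

theorem eq_zero (hx : SatisfiesRecurrence c d x) {k : ℕ} (hk : k + 1 ≤ d) (h₀ : x k = 0)
    (h₁ : x (k + 1) = 0) : ∀ i ≤ d, x i = 0 := by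
  intro i hi
  rcases le_total k i with hki | hik
  · exact hx.eq_zero_of_le h₀ h₁ i hki hi
  · have h := hx.reverse.eq_zero_of_le (k := d - (k + 1))
      (by simpa [show d - (d - (k + 1)) = k + 1 by omega])
      (by simpa [show d - (d - (k + 1) + 1) = k by omega]) (d - i) (by omega) (by omega)
    simpa [show d - (d - i) = i by omega] using h

end SatisfiesRecurrence

theorem satisfiesRecurrence_reflect {β : K} {x : ℕ → K}
    (hx : ∀ m, m + 3 ≤ d → x m - x (m + 3) = β * (x (m + 1) - x (m + 2))) :
    SatisfiesRecurrence (β - 1) d (fun i => x i - x (d - i)) := by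
  have hconst : ∀ m, m + 2 ≤ d →
      x m - (β - 1) * x (m + 1) + x (m + 2) = x 0 - (β - 1) * x 1 + x 2 := by
    intro m
    induction m with
    | zero => intro _; rfl
    | succ n ih =>
      intro hn
      linear_combination ih (by omega) - hx n (by omega)
  intro m hm
  have h := hconst (d - m - 2) (by omega)
  rw [show d - m - 2 + 1 = d - (m + 1) by omega, show d - m - 2 + 2 = d - m by omega,
    show d - m - 2 = d - (m + 2) by omega] at h
  linear_combination hconst m hm - h

theorem exists_reflect_eq_mul_reflect {c : K} {x y : ℕ → K}
    (hx : SatisfiesRecurrence c d (fun i => x i - x (d - i)))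
    (hy : SatisfiesRecurrence c d (fun i => y i - y (d - i)))
    (hmid : x ((d - 1) / 2) ≠ x (d - (d - 1) / 2)) :
    ∃ r, ∀ i ≤ d, y i - y (d - i) = r * (x i - x (d - i)) := by
  have hd : d ≠ 0 := by rintro rfl; exact hmid rfl
  set m := (d - 1) / 2
  set W : ℕ → K := fun i =>
    (y i - y (d - i)) * (x m - x (d - m)) - (y m - y (d - m)) * (x i - x (d - i))
  have hW : SatisfiesRecurrence c d W := fun k hk => by
    linear_combination (x m - x (d - m)) * hy k hk - (y m - y (d - m)) * hx k hk
  have hWm : W m = 0 := by ring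
  -- `d - m` is `m + 1` or `m + 2` according to the parity of `d`
  have hWm₁ : W (m + 1) = 0 := by
    rcases (show d = 2 * m + 1 ∨ d = 2 * m + 2 by omega) with h | h
    · simp only [W, show d - (m + 1) = m by omega, show d - m = m + 1 by omega]; ring
    · simp only [W, show d - (m + 1) = m + 1 by omega]; ring
  refine ⟨(y m - y (d - m)) / (x m - x (d - m)), fun i hi => ?_⟩
  rw [div_mul_eq_mul_div, eq_div_iff (sub_ne_zero.mpr hmid)]
  linear_combination hW.eq_zero (by omega) hWm hWm₁ i hi

theorem IsParameterArray.exists_satisfiesRecurrence {θ θs φ φp : ℕ → K}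
    (h : IsParameterArray K d θ θs φ φp) :
    ∃ c, SatisfiesRecurrence c d (fun i => θ i - θ (d - i)) ∧
      SatisfiesRecurrence c d (fun i => θs i - θs (d - i)) := by
  obtain ⟨-, hdist, -, -, β, hβ⟩ := h
  have hmul : ∀ (x : ℕ → K) (m : ℕ), x (m + 1) ≠ x (m + 2) →
      (x (m + 2 - 2) - x (m + 2 + 1)) / (x (m + 2 - 1) - x (m + 2)) = β →
      x m - x (m + 3) = β * (x (m + 1) - x (m + 2)) := by
    intro x m hne hdiv
    rwa [Nat.add_sub_cancel, show m + 2 - 1 = m + 1 by omega,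
      div_eq_iff (sub_ne_zero.mpr hne)] at hdiv
  refine ⟨β - 1, satisfiesRecurrence_reflect fun m hm => ?_,
    satisfiesRecurrence_reflect fun m hm => ?_⟩
  · exact hmul θ m (hdist (m + 1) (m + 2) (by omega) (by omega) (by omega)).1
      (hβ (m + 2) (by omega) (by omega)).1
  · exact hmul θs m (hdist (m + 1) (m + 2) (by omega) (by omega) (by omega)).2
      (hβ (m + 2) (by omega) (by omega)).2

end

theorem parameter_array_ratio {K : Type*} [Field K] (d : ℕ) (hd : 1 ≤ d)
    (θ θs φ φp : ℕ → K) (h : IsParameterArray K d θ θs φ φp) :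
    ∀ i, i ≤ d →
      (θ i - θ (d - i)) / (θ 0 - θ d) = (θs i - θs (d - i)) / (θs 0 - θs d) := by
  obtain ⟨c, hθ, hθs⟩ := h.exists_satisfiesRecurrence
  have hdist := h.2.1
  obtain ⟨r, hr⟩ := exists_reflect_eq_mul_reflect hθ hθs
    (hdist _ _ (by omega) (by omega) (by omega)).1
  have hr₀ : θs 0 - θs d = r * (θ 0 - θ d) := by simpa using hr 0 (Nat.zero_le d)
  have hθs₀ : θs 0 - θs d ≠ 0 := sub_ne_zero.mpr (hdist 0 d (Nat.zero_le d) le_rfl (by omega)).2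
  have hr_ne : r ≠ 0 := by rintro rfl; exact hθs₀ (hr₀.trans (zero_mul _))
  intro i hi
  rw [hr i hi, hr₀, mul_div_mul_left _ _ hr_ne]
end

section
/- Let (θ_i, θ*_i, i=0..d; φ_j, φ'_j, j=1..d) be a parameter array over a field K with d ≥ 1. Then φ_i = φ'_d ∑_{h=0}^{i-1}(θ_h-θ_{d-h})/(θ_0-θ_d) + (θ_i-θ_0)(θ*_{i-1}-θ*_d) for 1 ≤ i ≤ d. -/
open Finset

/-!
Put `v k = (θ k, θs k)` in the plane. Condition (v) says that both coordinates satisfy the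
palindromic recurrence `x (k + 3) - x k = β * (x (k + 2) - x (k + 1))`, so the consecutive
differences satisfy a second-order recurrence with unit determinant, and their Casoratian depends
only on the gap between the indices. Hence the signed area of the triangle `v q, v (q + 1), v r`
depends only on `r - q`, and that of `v 0, v i, v (i + 1)` equals that of `v 0, v 1, v (i + 1)`.

Conditions (iii) at `i = 1` and (iv) at `i = d` give `φp d - φp 1 = area (v 0, v 1, v d)`, so
the claim says that the area of the quadrilateral `v 0, v (i - 1), v i, v d` is this area times
`∑ h < i, (θ h - θ (d - h)) / (θ 0 - θ d)`. By the above, these quadrilateral areas are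
partial sums of the skew part `F k - F (d - k)` of the recurrent sequence
`F n = area (v 0, v 1, v n)`.
The skew parts of any two recurrent sequences are proportional: at the middle index their windows
of three consecutive values are parallel, and the recurrence carries parallelism down to index 0.
-/

namespace ParameterArray

variable {R : Type*} [CommRing R]

def IsRecurrent (β : R) (d : ℕ) (a : ℕ → R) : Prop :=
  ∀ k, k + 3 ≤ d → a (k + 3) = β * a (k + 2) - β * a (k + 1) + a k

def skewPart (d : ℕ) (c : ℕ → R) (k : ℕ) : R := c k - c (d - k)

def WindowsParallel (x y : ℕ → R) (j : ℕ) : Prop :=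
  x j * y (j + 1) = x (j + 1) * y j ∧ x (j + 1) * y (j + 2) = x (j + 2) * y (j + 1) ∧
    x j * y (j + 2) = x (j + 2) * y j

variable {β : R} {d : ℕ} {a b c c' x y : ℕ → R}

theorem IsRecurrent.skewPart (hc : IsRecurrent β d c) : IsRecurrent β d (skewPart d c) := by
  intro k hk
  have e0 : d - k = d - (k + 3) + 3 := by omega
  have e1 : d - (k + 1) = d - (k + 3) + 2 := by omega
  have e2 : d - (k + 2) = d - (k + 3) + 1 := by omega
  simp only [ParameterArray.skewPart, e0, e1, e2]
  linear_combination hc k hk + hc (d - (k + 3)) (by omega)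

theorem IsRecurrent.eq_zero (hx : IsRecurrent β d x) (h0 : x 0 = 0) (h1 : x 1 = 0)
    (h2 : x 2 = 0) : ∀ k ≤ d, x k = 0
  | 0, _ => h0
  | 1, _ => h1
  | 2, _ => h2
  | k + 3, hk => by
    rw [hx k hk, hx.eq_zero h0 h1 h2 k (by omega), hx.eq_zero h0 h1 h2 (k + 1) (by omega),
      hx.eq_zero h0 h1 h2 (k + 2) (by omega)]
    ring

theorem WindowsParallel.of_succ (hx : IsRecurrent β d x) (hy : IsRecurrent β d y) {j : ℕ}
    (hj : j + 3 ≤ d) (h : WindowsParallel x y (j + 1)) : WindowsParallel x y j := by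
  obtain ⟨h01, h12, h02⟩ := h
  refine ⟨?_, h01, ?_⟩
  · linear_combination (-y (j + 1)) * hx j hj + x (j + 1) * hy j hj + β * h01 - h02
  · linear_combination (-y (j + 2)) * hx j hj + x (j + 2) * hy j hj + β * h01 - h12

theorem WindowsParallel.zero_of (hx : IsRecurrent β d x) (hy : IsRecurrent β d y) :
    ∀ t, t + 2 ≤ d → WindowsParallel x y t → WindowsParallel x y 0
  | 0, _, h => h
  | t + 1, ht, h => WindowsParallel.zero_of hx hy t (by omega) (h.of_succ hx hy (by omega))

theorem windowsParallel_skewPart (hc : IsRecurrent β d c) (hc' : IsRecurrent β d c') {t : ℕ}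
    (ht : 2 * t + 2 ≤ d) (ht' : d ≤ 2 * t + 3) :
    WindowsParallel (skewPart d c) (skewPart d c') t := by
  -- the middle window of a skew part is a multiple of `(1, 0, -1)` for even `d`,
  -- and of `(β, 1, -1)` for odd `d`
  obtain rfl | rfl : d = 2 * t + 2 ∨ d = 2 * t + 3 := by omega
  · simp only [WindowsParallel, skewPart, show 2 * t + 2 - t = t + 2 by omega,
      show 2 * t + 2 - (t + 1) = t + 1 by omega, show 2 * t + 2 - (t + 2) = t by omega]
    refine ⟨?_, ?_, ?_⟩ <;> ring
  · have h := hc t (by omega)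
    have h' := hc' t (by omega)
    simp only [WindowsParallel, skewPart, show 2 * t + 3 - t = t + 3 by omega,
      show 2 * t + 3 - (t + 1) = t + 2 by omega, show 2 * t + 3 - (t + 2) = t + 1 by omega]
    refine ⟨?_, ?_, ?_⟩
    · linear_combination (c' (t + 2) - c' (t + 1)) * h - (c (t + 2) - c (t + 1)) * h'
    · ring
    · linear_combination (c' (t + 1) - c' (t + 2)) * h - (c (t + 1) - c (t + 2)) * h'

theorem skewPart_mul_skewPart_zero (hc : IsRecurrent β d c)
    (hc' : IsRecurrent β d c') {k : ℕ} (hk : k ≤ d) :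
    skewPart d c k * skewPart d c' 0 = skewPart d c 0 * skewPart d c' k := by
  rcases Nat.lt_or_ge d 2 with hd | hd
  · interval_cases d <;> interval_cases k <;> (unfold skewPart; ring)
  obtain ⟨h01, -, h02⟩ := (windowsParallel_skewPart hc hc' (t := (d - 2) / 2) (by omega)
    (by omega)).zero_of hc.skewPart hc'.skewPart _ (by omega)
  have hw : IsRecurrent β d fun k =>
      skewPart d c k * skewPart d c' 0 - skewPart d c 0 * skewPart d c' k :=
    fun k hk => by
      linear_combination skewPart d c' 0 * hc.skewPart k hk - skewPart d c 0 * hc'.skewPart k hk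
  linear_combination
    hw.eq_zero (sub_self _) (by linear_combination -h01) (by linear_combination -h02) k hk

/-- Twice the signed area of the triangle with vertices `(a p, b p)`, `(a q, b q)`, `(a r, b r)`. -/
def area (a b : ℕ → R) (p q r : ℕ) : R :=
  (a q - a p) * (b r - b p) - (a r - a p) * (b q - b p)

def casoratian (a b : ℕ → R) (k l : ℕ) : R :=
  (a (k + 1) - a k) * (b (l + 1) - b l) - (a (l + 1) - a l) * (b (k + 1) - b k)

theorem sum_casoratian (a b : ℕ → R) (s q n : ℕ) :
    ∑ t ∈ range n, casoratian a b s (q + t) =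
      (a (s + 1) - a s) * (b (q + n) - b q) - (a (q + n) - a q) * (b (s + 1) - b s) := by
  induction n with
  | zero => simp
  | succ n ih => rw [sum_range_succ, ih, casoratian, ← add_assoc]; ring

theorem casoratian_self_succ (ha : IsRecurrent β d a) (hb : IsRecurrent β d b) :
    ∀ k, k + 2 ≤ d → casoratian a b k (k + 1) = casoratian a b 0 1
  | 0, _ => rfl
  | k + 1, hk => by
    rw [← casoratian_self_succ ha hb k (by omega)]
    simp only [casoratian]
    linear_combination (a (k + 2) - a (k + 1)) * hb k hk - (b (k + 2) - b (k + 1)) * ha k hk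

theorem casoratian_self_add (ha : IsRecurrent β d a) (hb : IsRecurrent β d b) :
    ∀ j k, k + j + 1 ≤ d → casoratian a b k (k + j) = casoratian a b 0 j
  | 0, k, _ => by simp only [casoratian, add_zero]; ring
  | 1, k, hk => casoratian_self_succ ha hb k hk
  | j + 2, k, hk => by
    have e1 := casoratian_self_add ha hb (j + 1) k (by omega)
    have e0 := casoratian_self_add ha hb j k (by omega)
    simp only [casoratian, ← add_assoc] at e1 e0 ⊢
    linear_combination (β - 1) * e1 - e0 + (a (k + 1) - a k) * hb (k + j) (by omega)
      - (b (k + 1) - b k) * ha (k + j) (by omega) - (a 1 - a 0) * hb j (by omega)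
      + (b 1 - b 0) * ha j (by omega)

theorem area_self_succ (ha : IsRecurrent β d a) (hb : IsRecurrent β d b) {q n : ℕ}
    (h : q + n ≤ d) : area a b q (q + 1) (q + n) = area a b 0 1 n := by
  have h0 := sum_casoratian a b 0 0 n
  simp only [zero_add] at h0
  rw [area, area, ← sum_casoratian, ← h0]
  exact sum_congr rfl fun t ht => casoratian_self_add ha hb t q (by simp at ht; omega)

theorem area_zero_self_succ (ha : IsRecurrent β d a) (hb : IsRecurrent β d b) {i : ℕ}
    (h : i + 1 ≤ d) : area a b 0 i (i + 1) = area a b 0 1 (i + 1) := by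
  have hl : area a b 0 i (i + 1) = -∑ t ∈ range i, casoratian a b i (0 + t) := by
    rw [sum_casoratian, area]; simp only [zero_add]; ring
  have hr : area a b 0 1 (i + 1) = ∑ t ∈ range (i + 1), casoratian a b 0 (0 + t) := by
    rw [sum_casoratian, area]; simp only [zero_add]
  have h00 : casoratian a b 0 (0 + 0) = 0 := by rw [casoratian]; ring
  rw [hl, hr, sum_range_succ', h00, add_zero, ← sum_range_reflect, ← sum_neg_distrib]
  refine sum_congr rfl fun t ht => ?_
  have hi : i - 1 - t + (t + 1) = i := by simp at ht; omega
  rw [zero_add, zero_add, ← casoratian_self_add ha hb (t + 1) (i - 1 - t) (by omega), hi,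
    casoratian, casoratian]
  ring

theorem IsRecurrent.area (ha : IsRecurrent β d a) (hb : IsRecurrent β d b) :
    IsRecurrent β d (area a b 0 1) := fun k hk => by
  simp only [ParameterArray.area]
  linear_combination (a 1 - a 0) * hb k hk - (b 1 - b 0) * ha k hk

theorem area_add_area_eq_neg_sum (ha : IsRecurrent β d a) (hb : IsRecurrent β d b) :
    ∀ i, i + 1 ≤ d → area a b 0 i (i + 1) + area a b 0 (i + 1) d =
      -∑ k ∈ range (i + 1), skewPart d (area a b 0 1) k
  | 0, _ => by simp only [area, skewPart, zero_add, sum_range_one, Nat.sub_zero]; ring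
  | i + 1, hi => by
    have hfwd := area_self_succ ha hb (q := i + 1) (n := d - (i + 1)) (by omega)
    rw [show i + 1 + (d - (i + 1)) = d by omega] at hfwd
    rw [sum_range_succ, neg_add, ← area_add_area_eq_neg_sum ha hb i (by omega), skewPart,
      ← hfwd, ← area_zero_self_succ ha hb (i := i) (by omega)]
    simp only [area]
    ring

theorem area_add_area_mul_skewPart (ha : IsRecurrent β d a) (hb : IsRecurrent β d b) {i : ℕ}
    (hi : i + 1 ≤ d) :
    (area a b 0 i (i + 1) + area a b 0 (i + 1) d) * skewPart d a 0 =
      area a b 0 1 d * ∑ h ∈ range (i + 1), skewPart d a h := by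
  rw [area_add_area_eq_neg_sum ha hb i hi, neg_mul, sum_mul, mul_sum, ← sum_neg_distrib]
  refine sum_congr rfl fun k hk => ?_
  have hF0 : area a b 0 1 0 = 0 := by rw [area]; ring
  rw [skewPart_mul_skewPart_zero (ha.area hb) ha (by simp at hk; omega), skewPart, skewPart,
    Nat.sub_zero, hF0]
  ring

theorem sum_range_skewPart (c : ℕ → R) (d : ℕ) :
    ∑ h ∈ range d, skewPart d c h = c 0 - c d := by
  have hr : ∑ h ∈ range d, c (d - h) = ∑ h ∈ range d, c (h + 1) := by
    rw [← sum_range_reflect]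
    exact sum_congr rfl fun h hh => by simp at hh; congr 1; omega
  simp only [skewPart, sum_sub_distrib]
  rw [hr, ← sum_sub_distrib, sum_range_sub']

theorem isRecurrent_of_div_eq {K : Type*} [Field K] {β : K} {d : ℕ} {a : ℕ → K}
    (hne : ∀ k, k + 3 ≤ d → a (k + 1) ≠ a (k + 2))
    (h : ∀ i, 2 ≤ i → i + 1 ≤ d → (a (i - 2) - a (i + 1)) / (a (i - 1) - a i) = β) :
    IsRecurrent β d a := by
  intro k hk
  have hk' := h (k + 2) (by omega) (by omega)
  rw [show k + 2 - 1 = k + 1 by omega, Nat.add_sub_cancel,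
    div_eq_iff (sub_ne_zero.2 (hne k hk))] at hk'
  linear_combination -hk'

theorem area_add_area_eq_mul_sum_div {K : Type*} [Field K] {β : K} {d : ℕ} {a b : ℕ → K}
    (ha : IsRecurrent β d a) (hb : IsRecurrent β d b) (hne : a 0 ≠ a d) {i : ℕ}
    (hi : i + 1 ≤ d) :
    area a b 0 i (i + 1) + area a b 0 (i + 1) d =
      area a b 0 1 d * ∑ h ∈ range (i + 1), (a h - a (d - h)) / (a 0 - a d) := by
  rw [← sum_div, mul_div_assoc', eq_div_iff (sub_ne_zero.2 hne)]
  exact area_add_area_mul_skewPart ha hb hi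

end ParameterArray

theorem parameter_array_varphi_alt_general {K : Type*} [Field K] (d : ℕ)
    (θ θs φ φp : ℕ → K) (h : IsParameterArray K d θ θs φ φp) :
    ∀ i, 1 ≤ i → i ≤ d →
      φ i = φp d * (∑ h ∈ Finset.range i, (θ h - θ (d - h)) / (θ 0 - θ d))
        + (θ i - θ 0) * (θs (i - 1) - θs d) := by
  obtain ⟨-, hinj, hφ, hφp, β, hβ⟩ := h
  have hθ : ParameterArray.IsRecurrent β d θ := ParameterArray.isRecurrent_of_div_eq
    (fun k _ => (hinj (k + 1) (k + 2) (by omega) (by omega) (by omega)).1)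
    fun i hi hid => (hβ i hi hid).1
  have hθs : ParameterArray.IsRecurrent β d θs := ParameterArray.isRecurrent_of_div_eq
    (fun k _ => (hinj (k + 1) (k + 2) (by omega) (by omega) (by omega)).2)
    fun i hi hid => (hβ i hi hid).2
  intro i hi hid
  have hne : θ 0 ≠ θ d := (hinj 0 d (by omega) le_rfl (by omega)).1
  have hSd : ∑ h ∈ range d, (θ h - θ (d - h)) / (θ 0 - θ d) = 1 := by
    rw [← sum_div, div_eq_one_iff_eq (sub_ne_zero.2 hne)]
    exact ParameterArray.sum_range_skewPart θ d
  have hφ1 := hφ 1 le_rfl (by omega)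
  have hφpd := hφp d (by omega) le_rfl
  rw [sum_range_one, Nat.sub_zero, div_self (sub_ne_zero.2 hne), Nat.sub_self] at hφ1
  rw [hSd, Nat.sub_self, zero_add] at hφpd
  have hgap : φp d = φp 1 + ParameterArray.area θ θs 0 1 d := by
    rw [ParameterArray.area]; linear_combination hφpd + hφ1
  obtain ⟨j, rfl⟩ : ∃ j, i = j + 1 := ⟨i - 1, by omega⟩
  have hφi := hφ (j + 1) hi hid
  have key := ParameterArray.area_add_area_eq_mul_sum_div hθ hθs hne hid
  rw [Nat.add_sub_cancel] at hφi ⊢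
  rw [hgap]
  simp only [ParameterArray.area] at key ⊢
  linear_combination hφi + key

theorem parameter_array_varphi_alt {K : Type*} [Field K] (d : ℕ) (hd : 1 ≤ d)
    (θ θs φ φp : ℕ → K) (h : IsParameterArray K d θ θs φ φp) :
    ∀ i, 1 ≤ i → i ≤ d →
      φ i = φp d * (∑ h ∈ Finset.range i, (θ h - θ (d - h)) / (θ 0 - θ d))
        + (θ i - θ 0) * (θs (i - 1) - θs d) :=
  parameter_array_varphi_alt_general d θ θs φ φp h
end

section
/- Let d ≥ 0 and let q, s, s*, r_1, r_2 be nonzero scalars in a field K with r_1 r_2 = s s* q^{d+1}. Assume none of q^i, r_1 q^i, r_2 q^i, s* q^i / r_1, s* q^i / r_2 equals 1 for 1 ≤ i ≤ d, and neither s q^i nor s* q^i equals 1 for 2 ≤ i ≤ 2d. Define θ_i = q^{-i} + s q^{i+1}, θ*_i = q^{-i} + s* q^{i+1} for 0 ≤ i ≤ d, and φ_i = q^{1-2i}(1-q^i)(1-q^{i-d-1})(1-r_1 q^i)(1-r_2 q^i), φ'_i = q^{1-2i}(1-q^i)(1-q^{i-d-1})(r_1 - s* q^i)(r_2 - s* q^i)/s*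 for 1 ≤ i ≤ d. Then (θ_i, θ*_i; φ_j, φ'_j) is a parameter array over K. -/
open Finset

private lemma qpow_split {K : Type*} [Field K] {q : K} (hq : q ≠ 0) {a : ℤ} (b c : ℤ)
    (h : a = b + c) : q ^ a = q ^ b * q ^ c := by rw [h, zpow_add₀ hq]

private lemma theta_sub {K : Type*} [Field K] {q : K} (hq : q ≠ 0) (s : K) (a b : ℤ) :
    (q ^ (-a) + s * q ^ (a + 1)) - (q ^ (-b) + s * q ^ (b + 1))
      = (q ^ a - q ^ b) * (q ^ a)⁻¹ * (q ^ b)⁻¹ * (s * (q ^ a * q ^ b * q) - 1) := by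
  have ha : q ^ a ≠ 0 := zpow_ne_zero _ hq
  have hb : q ^ b ≠ 0 := zpow_ne_zero _ hq
  rw [zpow_neg, zpow_neg, qpow_split hq a 1 rfl, qpow_split hq b 1 rfl, zpow_one]
  field_simp
  ring

private lemma theta_term {K : Type*} [Field K] {q s : K} {d : ℕ} (hq : q ≠ 0)
    (hd : q ^ (d:ℤ) ≠ 1) (hsd : s * (q ^ (d:ℤ) * q) - 1 ≠ 0)
    {h : ℕ} (hhd : h ≤ d) :
    ((q ^ (-(h:ℤ)) + s * q ^ ((h:ℤ) + 1)) - (q ^ (-((d-h:ℕ):ℤ)) + s * q ^ (((d-h:ℕ):ℤ) + 1))) /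
      ((q ^ (-((0:ℕ):ℤ)) + s * q ^ (((0:ℕ):ℤ) + 1)) - (q ^ (-(d:ℤ)) + s * q ^ ((d:ℤ) + 1)))
    = (q ^ (h:ℤ) - q ^ (d:ℤ) * (q ^ (h:ℤ))⁻¹) / (1 - q ^ (d:ℤ)) := by
  have hX : q ^ (h:ℤ) ≠ 0 := zpow_ne_zero _ hq
  have hB : q ^ (d:ℤ) ≠ 0 := zpow_ne_zero _ hq
  have hc : ((d - h:ℕ):ℤ) = (d:ℤ) - (h:ℤ) := by omega
  have hsplit : q ^ ((d:ℤ) - (h:ℤ)) = q ^ (d:ℤ) * (q ^ (h:ℤ))⁻¹ := by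
    rw [zpow_sub₀ hq, div_eq_mul_inv]
  rw [hc, theta_sub hq, theta_sub hq, hsplit]
  simp only [Nat.cast_zero, zpow_zero, one_mul, inv_one, mul_one]
  rw [div_eq_div_iff (by
      exact mul_ne_zero (mul_ne_zero (sub_ne_zero_of_ne (fun e => hd e.symm)) (inv_ne_zero hB)) hsd)
    (sub_ne_zero_of_ne (fun e => hd e.symm))]
  field_simp

private lemma sum_formula {K : Type*} [Field K] {q s : K} {d : ℕ} (hq : q ≠ 0) (hq1 : q ≠ 1)
    (hd : q ^ (d:ℤ) ≠ 1) (hsd : s * (q ^ (d:ℤ) * q) - 1 ≠ 0) (i : ℕ) (hi : i ≤ d) :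
    ∑ h ∈ Finset.range i,
        ((q ^ (-(h:ℤ)) + s * q ^ ((h:ℤ) + 1)) - (q ^ (-((d-h:ℕ):ℤ)) + s * q ^ (((d-h:ℕ):ℤ) + 1))) /
          ((q ^ (-((0:ℕ):ℤ)) + s * q ^ (((0:ℕ):ℤ) + 1)) - (q ^ (-(d:ℤ)) + s * q ^ ((d:ℤ) + 1)))
      = (q ^ (i:ℤ) - 1) * (1 - q ^ (d:ℤ) * q * (q ^ (i:ℤ))⁻¹) / ((q - 1) * (1 - q ^ (d:ℤ))) := by
  induction i with
  | zero => simp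
  | succ i ih =>
    rw [Finset.sum_range_succ, ih (by omega), theta_term hq hd hsd (by omega : i ≤ d)]
    have hA : q ^ (i:ℤ) ≠ 0 := zpow_ne_zero _ hq
    have hB : q ^ (d:ℤ) ≠ 0 := zpow_ne_zero _ hq
    have hq1' : q - 1 ≠ 0 := sub_ne_zero_of_ne hq1
    have hB1 : 1 - q ^ (d:ℤ) ≠ 0 := sub_ne_zero_of_ne (fun e => hd e.symm)
    have hcast : ((i+1:ℕ):ℤ) = (i:ℤ)+1 := by push_cast; ring
    rw [hcast, qpow_split hq (i:ℤ) 1 rfl, zpow_one,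
      div_add_div _ _ (mul_ne_zero hq1' hB1) hB1,
      div_eq_div_iff (mul_ne_zero (mul_ne_zero hq1' hB1) hB1) (mul_ne_zero hq1' hB1)]
    field_simp
    ring

private lemma qpow_ne {K : Type*} [Field K] {q : K} (hq : q ≠ 0) {d : ℕ}
    (h1 : ∀ i : ℕ, 1 ≤ i → i ≤ d → q ^ i ≠ 1)
    {i j : ℕ} (hid : i ≤ d) (hjd : j ≤ d) (hij : i ≠ j) : q ^ (i:ℤ) ≠ q ^ (j:ℤ) := by
  rw [zpow_natCast, zpow_natCast]
  wlog hlt : i < j generalizing i j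
  · exact (this hjd hid hij.symm (by omega)).symm
  intro hcontra
  have hpow : q ^ j = q ^ i * q ^ (j - i) := by rw [← pow_add]; congr 1; omega
  have : (1 : K) = q ^ (j - i) := by
    apply mul_left_cancel₀ (pow_ne_zero i hq)
    rw [← hpow, ← hcontra, mul_one]
  exact h1 (j - i) (by omega) (by omega) this.symm

private lemma theta_ne {K : Type*} [Field K] {q t : K} (hq : q ≠ 0) {d : ℕ}
    (h1 : ∀ i : ℕ, 1 ≤ i → i ≤ d → q ^ i ≠ 1)
    (h2 : ∀ i : ℕ, 2 ≤ i → i ≤ 2 * d → t * q ^ i ≠ 1)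
    {i j : ℕ} (hid : i ≤ d) (hjd : j ≤ d) (hij : i ≠ j) :
    q ^ (-(i:ℤ)) + t * q ^ ((i:ℤ) + 1) ≠ q ^ (-(j:ℤ)) + t * q ^ ((j:ℤ) + 1) := by
  intro hcontra
  have h0 : (q ^ (i:ℤ) - q ^ (j:ℤ)) * (q ^ (i:ℤ))⁻¹ * (q ^ (j:ℤ))⁻¹
      * (t * (q ^ (i:ℤ) * q ^ (j:ℤ) * q) - 1) = 0 := by
    rw [← theta_sub hq t, hcontra, sub_self]
  have e1 : q ^ (i:ℤ) - q ^ (j:ℤ) ≠ 0 := sub_ne_zero_of_ne (qpow_ne hq h1 hid hjd hij)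
  have e2 : t * (q ^ (i:ℤ) * q ^ (j:ℤ) * q) - 1 ≠ 0 := by
    have : q ^ (i:ℤ) * q ^ (j:ℤ) * q = q ^ (i + j + 1) := by
      rw [zpow_natCast, zpow_natCast, ← pow_add, ← pow_succ]
    rw [this]
    exact sub_ne_zero_of_ne (h2 (i + j + 1) (by omega) (by omega))
  exact mul_ne_zero (mul_ne_zero (mul_ne_zero e1 (inv_ne_zero (zpow_ne_zero _ hq)))
    (inv_ne_zero (zpow_ne_zero _ hq))) e2 h0

private lemma cond_v {K : Type*} [Field K] {q t : K} (hq : q ≠ 0) {d : ℕ}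
    (h1 : ∀ i : ℕ, 1 ≤ i → i ≤ d → q ^ i ≠ 1)
    (h2 : ∀ i : ℕ, 2 ≤ i → i ≤ 2 * d → t * q ^ i ≠ 1)
    (k : ℕ) (hkd : k + 3 ≤ d) :
    ((q ^ (-(k:ℤ)) + t * q ^ ((k:ℤ) + 1)) - (q ^ (-((k+3:ℕ):ℤ)) + t * q ^ (((k+3:ℕ):ℤ) + 1))) /
      ((q ^ (-((k+1:ℕ):ℤ)) + t * q ^ (((k+1:ℕ):ℤ) + 1)) - (q ^ (-((k+2:ℕ):ℤ)) + t * q ^ (((k+2:ℕ):ℤ) + 1)))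
    = (1 + q + q * q) / q := by
  have hq1 : q ≠ 1 := by have := h1 1 le_rfl (by omega); rwa [pow_one] at this
  have qpow_ne : ∀ {i j : ℕ}, i ≤ d → j ≤ d → i < j → q ^ (i:ℤ) ≠ q ^ (j:ℤ) := by
    intro i j hid hjd hlt hcontra
    rw [zpow_natCast, zpow_natCast] at hcontra
    have hpow : q ^ j = q ^ i * q ^ (j - i) := by rw [← pow_add]; congr 1; omega
    have : (1 : K) = q ^ (j - i) := by
      apply mul_left_cancel₀ (pow_ne_zero i hq)
      rw [← hpow, ← hcontra, mul_one]
    exact h1 (j - i) (by omega) (by omega) this.symm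
  rw [theta_sub hq, theta_sub hq]
  have cj : ∀ j : ℕ, q ^ ((k+j:ℕ):ℤ) = q ^ (k:ℤ) * q ^ j := by
    intro j; rw [zpow_natCast, pow_add, zpow_natCast]
  have hA : q ^ (k:ℤ) ≠ 0 := zpow_ne_zero _ hq
  have dn1 : q ^ ((k+1:ℕ):ℤ) - q ^ ((k+2:ℕ):ℤ) ≠ 0 :=
    sub_ne_zero_of_ne (qpow_ne (by omega) (by omega) (by omega))
  have dn2 : t * (q ^ ((k+1:ℕ):ℤ) * q ^ ((k+2:ℕ):ℤ) * q) - 1 ≠ 0 := by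
    rw [zpow_natCast, zpow_natCast, ← pow_add, ← pow_succ]
    exact sub_ne_zero_of_ne (h2 (k+1+(k+2)+1) (by omega) (by omega))
  have hinv1 : (q ^ ((k+1:ℕ):ℤ))⁻¹ ≠ 0 := inv_ne_zero (zpow_ne_zero _ hq)
  have hinv2 : (q ^ ((k+2:ℕ):ℤ))⁻¹ ≠ 0 := inv_ne_zero (zpow_ne_zero _ hq)
  rw [div_eq_div_iff (mul_ne_zero (mul_ne_zero (mul_ne_zero dn1 hinv1) hinv2) dn2) hq]
  rw [cj 1, cj 2, cj 3]
  field_simp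
  ring

set_option maxHeartbeats 1600000 in
private lemma cond3_alg {K : Type*} [Field K] (q s ss r1 r2 A B : K) (hq : q ≠ 0) (hss : ss ≠ 0)
    (hA : A ≠ 0) (hB : B ≠ 0) (hq1 : q - 1 ≠ 0) (hB1 : 1 - B ≠ 0) (hr1 : r1 ≠ 0)
    (hrel : r1 * r2 = s * ss * (B * q)) :
    q * A⁻¹ * A⁻¹ * (1 - A) * (1 - A * B⁻¹ * q⁻¹) * (1 - r1 * A) * (1 - r2 * A)
    = q⁻¹ * (1 - q) * (1 - B⁻¹) * (r1 - ss * q) * (r2 - ss * q) / ss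
        * ((A - 1) * (1 - B * q * A⁻¹) / ((q - 1) * (1 - B)))
      + ((A⁻¹ + ss * (A * q)) - (1 + ss * q)) * ((A⁻¹ * q + s * A) - (B⁻¹ + s * (B * q))) := by
  have h2 : r2 = s * ss * (B * q) / r1 := by rw [eq_div_iff hr1]; linear_combination hrel
  subst h2
  have hD1 : A * A * (B * q) * r1 ≠ 0 :=
    mul_ne_zero (mul_ne_zero (mul_ne_zero hA hA) (mul_ne_zero hB hq)) hr1
  have hD2a : q * B * r1 * ss ≠ 0 := mul_ne_zero (mul_ne_zero (mul_ne_zero hq hB) hr1) hss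
  have hD2b : (q - 1) * (1 - B) * A ≠ 0 := mul_ne_zero (mul_ne_zero hq1 hB1) hA
  have hD3 : A * (A * B) ≠ 0 := mul_ne_zero hA (mul_ne_zero hA hB)
  have step1 : q * A⁻¹ * A⁻¹ * (1 - A) * (1 - A * B⁻¹ * q⁻¹) * (1 - r1 * A)
      * (1 - (s * ss * (B * q) / r1) * A)
      = q * (1 - A) * (B * q - A) * (1 - r1 * A) * (r1 - s * ss * B * q * A)
        / (A * A * (B * q) * r1) := by
    rw [eq_div_iff hD1]; field_simp
    try ring
    try tauto
  have s2a : q⁻¹ * (1 - q) * (1 - B⁻¹) * (r1 - ss * q) * ((s * ss * (B * q) / r1) - ss * q) / ss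
      = (1 - q) * (B - 1) * (r1 - ss * q) * (s * ss * B * q - ss * q * r1) / (q * B * r1 * ss) := by
    rw [div_eq_div_iff hss hD2a]; field_simp
    try ring
    try tauto
  have s2b : (A - 1) * (1 - B * q * A⁻¹) / ((q - 1) * (1 - B))
      = (A - 1) * (A - B * q) / ((q - 1) * (1 - B) * A) := by
    rw [div_eq_div_iff (mul_ne_zero hq1 hB1) hD2b]; field_simp
    try ring
    try tauto
  have step3 : ((A⁻¹ + ss * (A * q)) - (1 + ss * q)) * ((A⁻¹ * q + s * A) - (B⁻¹ + s * (B * q)))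
      = (1 + ss * A * A * q - A - ss * q * A) * (q * B + s * A * A * B - A - s * B * B * q * A)
        / (A * (A * B)) := by
    rw [eq_div_iff hD3]; field_simp
    try ring
    try tauto
  rw [step1, s2a, s2b, div_mul_div_comm, step3,
    div_add_div _ _ (mul_ne_zero hD2a hD2b) hD3,
    div_eq_div_iff hD1 (mul_ne_zero (mul_ne_zero hD2a hD2b) hD3)]
  ring

set_option maxHeartbeats 1600000 in
private lemma cond4_alg {K : Type*} [Field K] (q s ss r1 r2 A B : K) (hq : q ≠ 0) (hss : ss ≠ 0)
    (hA : A ≠ 0) (hB : B ≠ 0) (hq1 : q - 1 ≠ 0) (hB1 : 1 - B ≠ 0) (hr1 : r1 ≠ 0)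
    (hrel : r1 * r2 = s * ss * (B * q)) :
    q * A⁻¹ * A⁻¹ * (1 - A) * (1 - A * B⁻¹ * q⁻¹) * (r1 - ss * A) * (r2 - ss * A) / ss
    = q⁻¹ * (1 - q) * (1 - B⁻¹) * (1 - r1 * q) * (1 - r2 * q)
        * ((A - 1) * (1 - B * q * A⁻¹) / ((q - 1) * (1 - B)))
      + ((A⁻¹ + ss * (A * q)) - (1 + ss * q))
        * ((B⁻¹ * A * q⁻¹ + s * (B * A⁻¹ * q * q)) - (1 + s * q)) := by
  have h2 : r2 = s * ss * (B * q) / r1 := by rw [eq_div_iff hr1]; linear_combination hrel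
  subst h2
  have hD1 : A * A * (B * q) * r1 * ss ≠ 0 :=
    mul_ne_zero (mul_ne_zero (mul_ne_zero (mul_ne_zero hA hA) (mul_ne_zero hB hq)) hr1) hss
  have hD2a : q * B * r1 ≠ 0 := mul_ne_zero (mul_ne_zero hq hB) hr1
  have hD2b : (q - 1) * (1 - B) * A ≠ 0 := mul_ne_zero (mul_ne_zero hq1 hB1) hA
  have hD3 : A * (A * B * q) ≠ 0 := mul_ne_zero hA (mul_ne_zero (mul_ne_zero hA hB) hq)
  have step1 : q * A⁻¹ * A⁻¹ * (1 - A) * (1 - A * B⁻¹ * q⁻¹) * (r1 - ss * A)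
      * ((s * ss * (B * q) / r1) - ss * A) / ss
      = q * (1 - A) * (B * q - A) * (r1 - ss * A) * (s * ss * B * q - ss * A * r1)
        / (A * A * (B * q) * r1 * ss) := by
    rw [div_eq_div_iff hss hD1]; field_simp
    try ring
    try tauto
  have s2a : q⁻¹ * (1 - q) * (1 - B⁻¹) * (1 - r1 * q) * (1 - (s * ss * (B * q) / r1) * q)
      = (1 - q) * (B - 1) * (1 - r1 * q) * (r1 - s * ss * B * q * q) / (q * B * r1) := by
    rw [eq_div_iff hD2a]; field_simp
    try ring
    try tauto
  have s2b : (A - 1) * (1 - B * q * A⁻¹) / ((q - 1) * (1 - B))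
      = (A - 1) * (A - B * q) / ((q - 1) * (1 - B) * A) := by
    rw [div_eq_div_iff (mul_ne_zero hq1 hB1) hD2b]; field_simp
    try ring
    try tauto
  have step3 : ((A⁻¹ + ss * (A * q)) - (1 + ss * q))
      * ((B⁻¹ * A * q⁻¹ + s * (B * A⁻¹ * q * q)) - (1 + s * q))
      = (1 + ss * A * A * q - A - ss * q * A)
        * (A * A + s * B * B * q * q * q - A * B * q - s * A * B * q * q) / (A * (A * B * q)) := by
    rw [eq_div_iff hD3]; field_simp
    try ring
    try tauto
  rw [step1, s2a, s2b, div_mul_div_comm, step3,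
    div_add_div _ _ (mul_ne_zero hD2a hD2b) hD3,
    div_eq_div_iff hD1 (mul_ne_zero (mul_ne_zero hD2a hD2b) hD3)]
  ring

set_option maxHeartbeats 2000000 in
theorem qRacah_parameter_array {K : Type*} [Field K] (d : ℕ)
    (q s ss r1 r2 : K)
    (hq : q ≠ 0) (hs : s ≠ 0) (hss : ss ≠ 0) (hr1 : r1 ≠ 0) (hr2 : r2 ≠ 0)
    (hprod : r1 * r2 = s * ss * q ^ (d + 1))
    (h1 : ∀ i : ℕ, 1 ≤ i → i ≤ d →
      q ^ i ≠ 1 ∧ r1 * q ^ i ≠ 1 ∧ r2 * q ^ i ≠ 1 ∧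
      ss * q ^ i / r1 ≠ 1 ∧ ss * q ^ i / r2 ≠ 1)
    (h2 : ∀ i : ℕ, 2 ≤ i → i ≤ 2 * d → s * q ^ i ≠ 1 ∧ ss * q ^ i ≠ 1) :
    IsParameterArray K d
      (fun i => q ^ (-(i : ℤ)) + s * q ^ ((i : ℤ) + 1))
      (fun i => q ^ (-(i : ℤ)) + ss * q ^ ((i : ℤ) + 1))
      (fun i => q ^ (1 - 2 * (i : ℤ)) * (1 - q ^ i) * (1 - q ^ ((i : ℤ) - (d : ℤ) - 1))
        * (1 - r1 * q ^ i) * (1 - r2 * q ^ i))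
      (fun i => q ^ (1 - 2 * (i : ℤ)) * (1 - q ^ i) * (1 - q ^ ((i : ℤ) - (d : ℤ) - 1))
        * (r1 - ss * q ^ i) * (r2 - ss * q ^ i) / ss) := by
  have h1' : ∀ i : ℕ, 1 ≤ i → i ≤ d → q ^ i ≠ 1 := fun i a b => (h1 i a b).1
  refine ⟨?_, ?_, ?_, ?_, ?_⟩
  · -- (i) nonzeroness
    intro i h1i hid
    dsimp only
    have hf1 : q ^ (1 - 2*(i:ℤ)) ≠ 0 := zpow_ne_zero _ hq
    have hf2 : (1:K) - q ^ i ≠ 0 := sub_ne_zero_of_ne (Ne.symm (h1 i h1i hid).1)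
    have hf3 : (1:K) - q ^ ((i:ℤ) - (d:ℤ) - 1) ≠ 0 := by
      intro hcontra
      have hx : (1:K) = q ^ ((i:ℤ) - (d:ℤ) - 1) := by linear_combination hcontra
      have hkey : q ^ ((i:ℤ) - (d:ℤ) - 1) * q ^ (((d+1-i:ℕ)):ℤ) = 1 := by
        rw [← zpow_add₀ hq, show ((i:ℤ) - (d:ℤ) - 1) + (((d+1-i:ℕ)):ℤ) = 0 by omega, zpow_zero]
      rw [← hx, one_mul, zpow_natCast] at hkey
      exact h1' (d+1-i) (by omega) (by omega) hkey
    have hf4 : (1:K) - r1 * q ^ i ≠ 0 := sub_ne_zero_of_ne (Ne.symm (h1 i h1i hid).2.1)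
    have hf5 : (1:K) - r2 * q ^ i ≠ 0 := sub_ne_zero_of_ne (Ne.symm (h1 i h1i hid).2.2.1)
    have hf6 : r1 - ss * q ^ i ≠ 0 := by
      intro hcontra
      have : ss * q ^ i / r1 = 1 := by
        rw [div_eq_one_iff_eq hr1]; linear_combination -hcontra
      exact (h1 i h1i hid).2.2.2.1 this
    have hf7 : r2 - ss * q ^ i ≠ 0 := by
      intro hcontra
      have : ss * q ^ i / r2 = 1 := by
        rw [div_eq_one_iff_eq hr2]; linear_combination -hcontra
      exact (h1 i h1i hid).2.2.2.2 this
    exact ⟨mul_ne_zero (mul_ne_zero (mul_ne_zero (mul_ne_zero hf1 hf2) hf3) hf4) hf5,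
      div_ne_zero (mul_ne_zero (mul_ne_zero (mul_ne_zero (mul_ne_zero hf1 hf2) hf3) hf6) hf7) hss⟩
  · -- (ii) distinctness
    intro i j hid hjd hij
    exact ⟨theta_ne hq h1' (fun k a b => (h2 k a b).1) hid hjd hij,
      theta_ne hq h1' (fun k a b => (h2 k a b).2) hid hjd hij⟩
  · -- (iii)
    intro i h1i hid
    have hd1 : 1 ≤ d := le_trans h1i hid
    have hq1 : q ≠ 1 := by have := h1' 1 le_rfl hd1; rwa [pow_one] at this
    have hdq : q ^ (d:ℤ) ≠ 1 := by rw [zpow_natCast]; exact h1' d hd1 le_rfl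
    have hsd : s * (q ^ (d:ℤ) * q) - 1 ≠ 0 := by
      rw [zpow_natCast, ← pow_succ]
      exact sub_ne_zero_of_ne (h2 (d+1) (by omega) (by omega)).1
    dsimp only
    rw [sum_formula hq hq1 hdq hsd i hid]
    have hci : ((i-1:ℕ):ℤ) = (i:ℤ) - 1 := by omega
    rw [hci]
    have hA : q ^ (i:ℤ) ≠ 0 := zpow_ne_zero _ hq
    have hB : q ^ (d:ℤ) ≠ 0 := zpow_ne_zero _ hq
    have E1 : q ^ (1 - 2*(i:ℤ)) = q * (q^(i:ℤ))⁻¹ * (q^(i:ℤ))⁻¹ := by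
      rw [show (1:ℤ) - 2*(i:ℤ) = 1 + -(i:ℤ) + -(i:ℤ) by ring, zpow_add₀ hq, zpow_add₀ hq,
        zpow_one, zpow_neg]
    have E2 : q ^ ((i:ℤ) - (d:ℤ) - 1) = q ^ (i:ℤ) * (q^(d:ℤ))⁻¹ * q⁻¹ := by
      rw [show (i:ℤ) - (d:ℤ) - 1 = (i:ℤ) + -(d:ℤ) + -1 by ring, zpow_add₀ hq, zpow_add₀ hq,
        zpow_neg, zpow_neg, zpow_one]
    have E3 : q ^ (-(i:ℤ)) = (q^(i:ℤ))⁻¹ := zpow_neg q _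
    have E4 : q ^ ((i:ℤ)+1) = q^(i:ℤ) * q := by rw [zpow_add₀ hq, zpow_one]
    have E6 : q ^ (-((i:ℤ)-1)) = (q^(i:ℤ))⁻¹ * q := by
      rw [show -((i:ℤ)-1) = -(i:ℤ) + 1 by ring, zpow_add₀ hq, zpow_neg, zpow_one]
    have E7 : q ^ ((i:ℤ)-1+1) = q^(i:ℤ) := by norm_num
    have E8 : q ^ (-(d:ℤ)) = (q^(d:ℤ))⁻¹ := zpow_neg q _
    have E9 : q ^ ((d:ℤ)+1) = q^(d:ℤ)*q := by rw [zpow_add₀ hq, zpow_one]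
    simp only [Nat.cast_one, Nat.cast_zero, pow_one, neg_zero, zpow_zero, zero_add, zpow_one]
    have E10 : q ^ ((1:ℤ) - (d:ℤ) - 1) = (q^(d:ℤ))⁻¹ := by
      rw [show (1:ℤ)-(d:ℤ)-1 = -(d:ℤ) by ring, zpow_neg]
    have E11 : q ^ ((1:ℤ) - 2*1) = q⁻¹ := by
      rw [show (1:ℤ) - 2*1 = -1 by ring, zpow_neg, zpow_one]
    rw [E1, E2, E3, E4, E6, E7, E8, E9, E10, E11]
    simp only [zpow_natCast]
    have hAn : (q:K)^i ≠ 0 := pow_ne_zero _ hq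
    have hBn : (q:K)^d ≠ 0 := pow_ne_zero _ hq
    have hq1' : q - 1 ≠ 0 := sub_ne_zero_of_ne hq1
    have hB1 : (1:K) - q^d ≠ 0 := sub_ne_zero_of_ne (Ne.symm (h1' d hd1 le_rfl))
    have hrel : r1 * r2 = s * ss * ((q:K)^d * q) := by rw [← pow_succ]; exact hprod
    generalize hGA : (q:K)^i = A at hAn ⊢
    generalize hGB : (q:K)^d = B at hBn hB1 hrel ⊢
    exact cond3_alg q s ss r1 r2 A B hq hss hAn hBn hq1' hB1 hr1 hrel
  · -- (iv)
    intro i h1i hid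
    have hd1 : 1 ≤ d := le_trans h1i hid
    have hq1 : q ≠ 1 := by have := h1' 1 le_rfl hd1; rwa [pow_one] at this
    have hdq : q ^ (d:ℤ) ≠ 1 := by rw [zpow_natCast]; exact h1' d hd1 le_rfl
    have hsd : s * (q ^ (d:ℤ) * q) - 1 ≠ 0 := by
      rw [zpow_natCast, ← pow_succ]
      exact sub_ne_zero_of_ne (h2 (d+1) (by omega) (by omega)).1
    dsimp only
    rw [sum_formula hq hq1 hdq hsd i hid]
    have hci : ((d-i+1:ℕ):ℤ) = (d:ℤ) - (i:ℤ) + 1 := by omega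
    rw [hci]
    have hA : q ^ (i:ℤ) ≠ 0 := zpow_ne_zero _ hq
    have hB : q ^ (d:ℤ) ≠ 0 := zpow_ne_zero _ hq
    have E1 : q ^ (1 - 2*(i:ℤ)) = q * (q^(i:ℤ))⁻¹ * (q^(i:ℤ))⁻¹ := by
      rw [show (1:ℤ) - 2*(i:ℤ) = 1 + -(i:ℤ) + -(i:ℤ) by ring, zpow_add₀ hq, zpow_add₀ hq,
        zpow_one, zpow_neg]
    have E2 : q ^ ((i:ℤ) - (d:ℤ) - 1) = q ^ (i:ℤ) * (q^(d:ℤ))⁻¹ * q⁻¹ := by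
      rw [show (i:ℤ) - (d:ℤ) - 1 = (i:ℤ) + -(d:ℤ) + -1 by ring, zpow_add₀ hq, zpow_add₀ hq,
        zpow_neg, zpow_neg, zpow_one]
    have E3 : q ^ (-(i:ℤ)) = (q^(i:ℤ))⁻¹ := zpow_neg q _
    have E4 : q ^ ((i:ℤ)+1) = q^(i:ℤ) * q := by rw [zpow_add₀ hq, zpow_one]
    have E12 : q ^ (-((d:ℤ) - (i:ℤ) + 1)) = (q^(d:ℤ))⁻¹ * q^(i:ℤ) * q⁻¹ := by
      rw [show -((d:ℤ) - (i:ℤ) + 1) = -(d:ℤ) + (i:ℤ) + -1 by ring, zpow_add₀ hq, zpow_add₀ hq,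
        zpow_neg, zpow_neg, zpow_one]
    have E13 : q ^ ((d:ℤ) - (i:ℤ) + 1 + 1) = q^(d:ℤ) * (q^(i:ℤ))⁻¹ * q * q := by
      rw [show (d:ℤ) - (i:ℤ) + 1 + 1 = (d:ℤ) + -(i:ℤ) + 1 + 1 by ring, zpow_add₀ hq,
        zpow_add₀ hq, zpow_add₀ hq, zpow_neg, zpow_one]
    simp only [Nat.cast_one, Nat.cast_zero, pow_one, neg_zero, zpow_zero, zero_add, zpow_one]
    have E10 : q ^ ((1:ℤ) - (d:ℤ) - 1) = (q^(d:ℤ))⁻¹ := by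
      rw [show (1:ℤ)-(d:ℤ)-1 = -(d:ℤ) by ring, zpow_neg]
    have E11 : q ^ ((1:ℤ) - 2*1) = q⁻¹ := by
      rw [show (1:ℤ) - 2*1 = -1 by ring, zpow_neg, zpow_one]
    rw [E1, E2, E3, E4, E12, E13, E10, E11]
    simp only [zpow_natCast]
    have hAn : (q:K)^i ≠ 0 := pow_ne_zero _ hq
    have hBn : (q:K)^d ≠ 0 := pow_ne_zero _ hq
    have hq1' : q - 1 ≠ 0 := sub_ne_zero_of_ne hq1
    have hB1 : (1:K) - q^d ≠ 0 := sub_ne_zero_of_ne (Ne.symm (h1' d hd1 le_rfl))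
    have hrel : r1 * r2 = s * ss * ((q:K)^d * q) := by rw [← pow_succ]; exact hprod
    generalize hGA : (q:K)^i = A at hAn ⊢
    generalize hGB : (q:K)^d = B at hBn hB1 hrel ⊢
    exact cond4_alg q s ss r1 r2 A B hq hss hAn hBn hq1' hB1 hr1 hrel
  · -- (v)
    refine ⟨(1 + q + q * q) / q, ?_⟩
    intro i h2i hi1d
    obtain ⟨k, rfl⟩ : ∃ k, i = k + 2 := ⟨i - 2, by omega⟩
    dsimp only
    have e2 : k + 2 - 2 = k := by omega
    have e1 : k + 2 - 1 = k + 1 := by omega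
    have e3 : k + 2 + 1 = k + 3 := by omega
    rw [e1, e2, e3]
    exact ⟨cond_v hq h1' (fun a b c => (h2 a b c).1) k (by omega),
      cond_v hq h1' (fun a b c => (h2 a b c).2) k (by omega)⟩
end

section
/- Let d ≥ 0 and let K have characteristic zero or odd prime characteristic greater than d. Let A ∈ Mat_{d+1}(K) be the tridiagonal matrix with zero diagonal, A_{i-1,i} = d - i + 1 and A_{i,i-1} = i, and let A* = diag(d, d-2, d-4, ..., -d). Then A, A* is a Leonard pair in Mat_{d+1}(K), A has constant row sum d, and A is in TD-D canonical form. -/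
open Polynomial Matrix Finset

variable {K : Type*} [Field K]

/-- Every nonzero entry lies on the diagonal or the subdiagonal. -/
def LowerBidiagonal {K : Type*} [Field K] {d : ℕ}
    (A : Matrix (Fin (d + 1)) (Fin (d + 1)) K) : Prop :=
  ∀ i j : Fin (d + 1), (i : ℕ) ≠ (j : ℕ) → (i : ℕ) ≠ (j : ℕ) + 1 → A i j = 0

/-- Every nonzero entry lies on the diagonal or the superdiagonal. -/
def UpperBidiagonal {K : Type*} [Field K] {d : ℕ}
    (A : Matrix (Fin (d + 1)) (Fin (d + 1)) K) : Prop :=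
  ∀ i j : Fin (d + 1), (i : ℕ) ≠ (j : ℕ) → (j : ℕ) ≠ (i : ℕ) + 1 → A i j = 0

/-- Every nonzero entry lies on the diagonal, subdiagonal, or superdiagonal. -/
def Tridiagonal {K : Type*} [Field K] {d : ℕ}
    (A : Matrix (Fin (d + 1)) (Fin (d + 1)) K) : Prop :=
  ∀ i j : Fin (d + 1), 1 < |((i : ℕ) : ℤ) - ((j : ℕ) : ℤ)| → A i j = 0

/-!
Let `f_i = (1 - X)^i (1 + X)^(d - i)` be the Krawtchouk polynomials and `P` the matrix whose row `i`
holds the coefficients of `f_i`. On the monomials `1, X, …, X^d`, `A` is the matrix of the operator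
`L p = d X p + (1 - X²) p'`, and `L f_i = (d - 2i) f_i`; hence `P A = A* P`. The transform
`p ↦ (1 + X)^d p((1 - X) / (1 + X))` sends `X^i` to `f_i` and `f_i` to `2^d X^i`, so `P² = 2^d`.
Thus conjugation by `P` swaps `A` and `A*`, and the Leonard pair conditions for `A, A*` are
transported from those for the diagonal `A*` against the tridiagonal `A`, where the primitive
idempotents of `A*` are matrix units.
-/

lemma Matrix.single_eq_zero_iff {m n α : Type*} [DecidableEq m] [DecidableEq n] [Zero α]
    (i : m) (j : n) (a : α) : single i j a = 0 ↔ a = 0 :=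
  ⟨fun h => by simpa using congr_fun (congr_fun h i) j, fun h => h ▸ single_zero i j⟩

lemma aeval_units_conj {A : Type*} [Ring A] [Algebra K A] (u : Aˣ) (x : A) (p : K[X]) :
    aeval ((u : A) * x * (↑u⁻¹ : A)) p = u * aeval x p * (↑u⁻¹ : A) := by
  induction p using Polynomial.induction_on' with
  | add p q hp hq => rw [map_add, map_add, hp, hq, mul_add, add_mul]
  | monomial n c =>
    simp only [aeval_monomial, Units.conj_pow, ← Algebra.smul_def, smul_mul_assoc, mul_smul_comm]

section Matrices

variable {d : ℕ} {θ : Fin (d + 1) → K}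

local notation "Mat" => Matrix (Fin (d + 1)) (Fin (d + 1)) K

lemma primIdem_units_conj (u : Mat ˣ) (M : Mat) (i : Fin (d + 1)) :
    primIdem ((u : Mat) * M * (↑u⁻¹ : Mat)) θ i = u * primIdem M θ i * (↑u⁻¹ : Mat) :=
  aeval_units_conj u M _

lemma IsEigenvalueSeq.units_conj {M N : Mat} (h : IsEigenvalueSeq M N θ) (u : Mat ˣ) :
    IsEigenvalueSeq ((u : Mat) * M * (↑u⁻¹ : Mat)) ((u : Mat) * N * (↑u⁻¹ : Mat)) θ := by
  obtain ⟨⟨hθ, hchar⟩, hseq⟩ := h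
  have hconj (i j : Fin (d + 1)) :
      primIdem ((u : Mat) * M * (↑u⁻¹ : Mat)) θ i * (u * N * (↑u⁻¹ : Mat)) *
        primIdem ((u : Mat) * M * (↑u⁻¹ : Mat)) θ j =
          u * (primIdem M θ i * N * primIdem M θ j) * (↑u⁻¹ : Mat) := by
    rw [primIdem_units_conj, primIdem_units_conj]
    simp only [mul_assoc, Units.inv_mul_cancel_left]
  refine ⟨⟨hθ, by rw [coe_units_inv, charpoly_units_conj, hchar]⟩, fun i j => ?_⟩
  simp only [hconj, ne_eq, Units.mul_left_eq_zero, Units.mul_right_eq_zero]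
  exact hseq i j

lemma mul_eq_mul_of_mul_self_eq_smul_one {A B P : Mat} {c : K} (hc : c ≠ 0)
    (hPP : P * P = c • 1) (hPA : P * A = B * P) : A * P = P * B := by
  refine smul_right_injective _ hc ?_
  calc c • (A * P) = P * (P * A) * P := by
        rw [← mul_assoc, hPP, smul_mul_assoc, one_mul, smul_mul_assoc]
    _ = c • (P * B) := by
        rw [hPA, ← mul_assoc, mul_assoc _ P P, hPP, mul_smul_comm, mul_one]

lemma IsEigenvalueSeq.swap_of_intertwining {A B P : Mat} {c : K} (hc : c ≠ 0)
    (hPP : P * P = c • 1) (hPA : P * A = B * P) (h : IsEigenvalueSeq B A θ) :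
    IsEigenvalueSeq A B θ := by
  have hPPM : ∀ M : Mat, c⁻¹ • (P * (P * M)) = M := fun M => by
    rw [← mul_assoc, hPP, smul_mul_assoc, one_mul, smul_smul, inv_mul_cancel₀ hc, one_smul]
  have hPP' : P * (c⁻¹ • P) = 1 := by simpa using hPPM 1
  let u : Mat ˣ := ⟨P, c⁻¹ • P, hPP', by rwa [smul_mul_assoc, ← mul_smul_comm]⟩
  convert h.units_conj u⁻¹ using 1 <;>
    simp only [u, Units.inv_mk, Units.val_mk, smul_mul_assoc, mul_assoc]
  · rw [← hPA, hPPM]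
  · rw [mul_eq_mul_of_mul_self_eq_smul_one hc hPP hPA, hPPM]

lemma primIdem_diagonal (hθ : Function.Injective θ) (i : Fin (d + 1)) :
    primIdem (diagonal θ) θ i = single i i 1 := by
  rw [primIdem, ← diagonal_single, ← diagonalAlgHom_apply (R := K), aeval_algHom_apply,
    diagonalAlgHom_apply, aeval_pi_apply]
  congr 1
  ext k
  simp only [map_prod, _root_.map_mul, map_sub, aeval_C, aeval_X, Algebra.algebraMap_self,
    RingHom.id_apply]
  rcases eq_or_ne k i with rfl | hki
  · rw [Pi.single_eq_same]
    exact prod_eq_one fun j hj =>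
      inv_mul_cancel₀ (sub_ne_zero.2 (hθ.ne (ne_of_mem_erase hj).symm))
  · rw [Pi.single_eq_of_ne hki]
    exact prod_eq_zero (mem_erase.2 ⟨hki, mem_univ k⟩) (by rw [sub_self, mul_zero])

lemma isEigenvalueSeq_diagonal (hθ : Function.Injective θ) {B : Mat} (hB : Tridiagonal B)
    (hB' : ∀ i j : Fin (d + 1), |((i : ℕ) : ℤ) - ((j : ℕ) : ℤ)| = 1 → B i j ≠ 0) :
    IsEigenvalueSeq (diagonal θ) B θ := by
  refine ⟨⟨hθ, charpoly_diagonal θ⟩, fun i j => ?_⟩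
  simp only [primIdem_diagonal hθ, single_mul_mul_single, one_mul, mul_one, ne_eq,
    single_eq_zero_iff]
  exact ⟨hB i j, hB' i j⟩

end Matrices

/-- Row `i` holds the coefficients of `S (X ^ i)`: this is the transpose of the usual matrix of `S`
on `1, X, …, X^d`, so products of these matrices compose operators in reverse order. -/
noncomputable def monomialMatrix (d : ℕ) (S : K[X] →ₗ[K] K[X]) :
    Matrix (Fin (d + 1)) (Fin (d + 1)) K :=
  of fun i j => (S (X ^ (i : ℕ))).coeff j

lemma coeff_linearMap_apply_eq_sum {d : ℕ} (S : K[X] →ₗ[K] K[X]) {p : K[X]}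
    (hp : p.natDegree ≤ d) (j : ℕ) :
    (S p).coeff j = ∑ k : Fin (d + 1), p.coeff k * (S (X ^ (k : ℕ))).coeff j := by
  conv_lhs => rw [p.as_sum_range_C_mul_X_pow' (Nat.lt_succ_of_le hp)]
  simp only [← smul_eq_C_mul, map_sum, map_smul, finsetSum_coeff, coeff_smul, smul_eq_mul]
  exact (Fin.sum_univ_eq_sum_range (fun k => p.coeff k * (S (X ^ k)).coeff j) (d + 1)).symm

lemma monomialMatrix_mul {d : ℕ} {S T : K[X] →ₗ[K] K[X]}
    (hS : ∀ i ≤ d, (S (X ^ i)).natDegree ≤ d) :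
    monomialMatrix d S * monomialMatrix d T = monomialMatrix d (T ∘ₗ S) := by
  ext i j
  simp only [monomialMatrix, mul_apply, of_apply, LinearMap.comp_apply]
  rw [coeff_linearMap_apply_eq_sum T (hS i (Nat.lt_succ_iff.1 i.2))]

/-- On polynomials of degree at most `n` this is `p ↦ (1 + X)^n p((1 - X) / (1 + X))`. -/
noncomputable def krawtchoukTransform (n : ℕ) : K[X] →ₗ[K] K[X] :=
  ∑ k ∈ range (n + 1), (lcoeff K k).smulRight ((1 - X) ^ k * (1 + X) ^ (n - k))

lemma krawtchoukTransform_apply (n : ℕ) (p : K[X]) :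
    krawtchoukTransform n p =
      ∑ k ∈ range (n + 1), p.coeff k • ((1 - X) ^ k * (1 + X) ^ (n - k)) := by
  simp [krawtchoukTransform]

lemma krawtchoukTransform_X_pow {n i : ℕ} (hi : i ≤ n) :
    krawtchoukTransform n (X ^ i : K[X]) = (1 - X) ^ i * (1 + X) ^ (n - i) := by
  rw [krawtchoukTransform_apply, sum_eq_single_of_mem i (mem_range.2 (Nat.lt_succ_of_le hi))]
  · simp
  · intro k _ hki
    rw [coeff_X_pow, if_neg hki, zero_smul]

lemma krawtchoukTransform_succ {n : ℕ} {p : K[X]} (hp : p.natDegree ≤ n) :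
    krawtchoukTransform (n + 1) p = (1 + X) * krawtchoukTransform n p := by
  rw [krawtchoukTransform_apply, sum_range_succ,
    coeff_eq_zero_of_natDegree_lt (Nat.lt_succ_of_le hp), zero_smul, add_zero,
    krawtchoukTransform_apply, mul_sum]
  refine sum_congr rfl fun k hk => ?_
  rw [Nat.sub_add_comm (Nat.lt_succ_iff.1 (mem_range.1 hk)), mul_smul_comm]
  ring_nf

lemma krawtchoukTransform_succ_X_mul (n : ℕ) (p : K[X]) :
    krawtchoukTransform (n + 1) (X * p) = (1 - X) * krawtchoukTransform n p := by
  rw [krawtchoukTransform_apply, sum_range_succ', krawtchoukTransform_apply, mul_sum]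
  simp only [coeff_X_mul, mul_coeff_zero, coeff_X_zero, zero_mul, zero_smul, add_zero,
    Nat.add_sub_add_right, mul_smul_comm, pow_succ]
  ring_nf

lemma krawtchoukTransform_succ_one_sub_X_mul {n : ℕ} {p : K[X]} (hp : p.natDegree ≤ n) :
    krawtchoukTransform (n + 1) ((1 - X) * p) = 2 * X * krawtchoukTransform n p := by
  rw [sub_mul, one_mul, map_sub, krawtchoukTransform_succ hp, krawtchoukTransform_succ_X_mul]
  ring

lemma krawtchoukTransform_succ_one_add_X_mul {n : ℕ} {p : K[X]} (hp : p.natDegree ≤ n) :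
    krawtchoukTransform (n + 1) ((1 + X) * p) = 2 * krawtchoukTransform n p := by
  rw [add_mul, one_mul, map_add, krawtchoukTransform_succ hp, krawtchoukTransform_succ_X_mul]
  ring

lemma natDegree_one_sub_X_pow_mul_one_add_X_pow_le (a b : ℕ) :
    ((1 - X) ^ a * (1 + X) ^ b : K[X]).natDegree ≤ a + b := by
  compute_degree

lemma krawtchoukTransform_one_sub_X_pow_mul_one_add_X_pow (a b : ℕ) :
    krawtchoukTransform (a + b) ((1 - X) ^ a * (1 + X) ^ b : K[X]) = 2 ^ (a + b) * X ^ a := by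
  induction a with
  | zero =>
    induction b with
    | zero => simp [krawtchoukTransform_apply]
    | succ b ih =>
      rw [← add_assoc, pow_succ', mul_left_comm, krawtchoukTransform_succ_one_add_X_mul
        (natDegree_one_sub_X_pow_mul_one_add_X_pow_le 0 b), ih]
      ring
  | succ a ih =>
    rw [add_right_comm, pow_succ', mul_assoc, krawtchoukTransform_succ_one_sub_X_mul
      (natDegree_one_sub_X_pow_mul_one_add_X_pow_le a b), ih]
    ring

noncomputable def krawtchoukOp (d : ℕ) : K[X] →ₗ[K] K[X] :=
  (d : K) • LinearMap.mulLeft K X + LinearMap.mulLeft K (1 - X ^ 2) ∘ₗ derivative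

lemma krawtchoukOp_apply (d : ℕ) (p : K[X]) :
    krawtchoukOp d p = (d : K) • (X * p) + (1 - X ^ 2) * derivative p := rfl

lemma coeff_krawtchoukOp_X_pow (d i j : ℕ) :
    (krawtchoukOp d (X ^ i : K[X])).coeff j =
      if j = i + 1 then (d : K) - i else if i = j + 1 then (i : K) else 0 := by
  rcases i with _ | i
  · simp [krawtchoukOp_apply, coeff_X, eq_comm]
  · have h : (1 - X ^ 2) * derivative (X ^ (i + 1) : K[X]) =
        C ((i : K) + 1) * X ^ i - C ((i : K) + 1) * X ^ (i + 2) := by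
      simp only [derivative_X_pow_succ, map_add, map_natCast, map_one]
      ring
    rw [krawtchoukOp_apply, h]
    simp only [coeff_add, coeff_sub, coeff_smul, coeff_C_mul, coeff_X_pow, ← pow_succ',
      smul_eq_mul]
    push_cast
    split_ifs <;> first | omega | ring

lemma krawtchoukOp_eigen {d i : ℕ} (hi : i ≤ d) :
    krawtchoukOp d ((1 - X) ^ i * (1 + X) ^ (d - i) : K[X]) =
      ((d : K) - 2 * i) • ((1 - X) ^ i * (1 + X) ^ (d - i)) := by
  obtain ⟨m, rfl⟩ := Nat.exists_eq_add_of_le hi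
  have h1 : ∀ n : ℕ, (1 - X) * derivative ((1 - X) ^ n : K[X]) = -(n : K[X]) * (1 - X) ^ n := by
    rintro (_ | n)
    · simp
    · simp only [derivative_pow, Nat.cast_add, Nat.cast_one, map_add, map_natCast, map_one,
        add_tsub_cancel_right, derivative_sub, derivative_one, derivative_X, zero_sub]
      ring
  have h2 : ∀ n : ℕ, (1 + X) * derivative ((1 + X) ^ n : K[X]) = (n : K[X]) * (1 + X) ^ n := by
    rintro (_ | n)
    · simp
    · simp only [derivative_pow, Nat.cast_add, Nat.cast_one, map_add, map_natCast, map_one,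
        add_tsub_cancel_right, derivative_one, derivative_X, zero_add]
      ring
  rw [Nat.add_sub_cancel_left, krawtchoukOp_apply, derivative_mul, smul_eq_C_mul, smul_eq_C_mul]
  simp only [Nat.cast_add, map_add, map_sub, _root_.map_mul, map_natCast, map_ofNat]
  linear_combination (1 + X) * (1 + X) ^ m * h1 i + (1 - X) * (1 - X) ^ i * h2 m

section Krawtchouk

variable {d : ℕ}

lemma natDegree_krawtchoukTransform_X_pow_le {i : ℕ} (hi : i ≤ d) :
    (krawtchoukTransform d (X ^ i : K[X])).natDegree ≤ d := by
  rw [krawtchoukTransform_X_pow hi]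
  simpa [Nat.add_sub_cancel' hi] using
    natDegree_one_sub_X_pow_mul_one_add_X_pow_le (K := K) i (d - i)

lemma monomialMatrix_krawtchoukTransform_apply_zero (i : Fin (d + 1)) :
    monomialMatrix d (krawtchoukTransform (K := K) d) i 0 = 1 := by
  simp [monomialMatrix, krawtchoukTransform_X_pow (Nat.lt_succ_iff.1 i.2), coeff_zero_eq_eval_zero]

lemma monomialMatrix_krawtchoukTransform_mul_self :
    monomialMatrix d (krawtchoukTransform (K := K) d) * monomialMatrix d (krawtchoukTransform d) =
      (2 ^ d : K) • 1 := by
  rw [monomialMatrix_mul fun i hi => natDegree_krawtchoukTransform_X_pow_le hi]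
  ext i j
  have hi := Nat.lt_succ_iff.1 i.2
  have h := krawtchoukTransform_one_sub_X_pow_mul_one_add_X_pow (K := K) i (d - i)
  rw [Nat.add_sub_cancel' hi, ← C_ofNat, ← C_pow] at h
  simp only [monomialMatrix, of_apply, LinearMap.comp_apply, krawtchoukTransform_X_pow hi, h,
    coeff_C_mul, coeff_X_pow, Matrix.smul_apply, one_apply, Fin.ext_iff, smul_eq_mul, mul_ite,
    mul_one, mul_zero, eq_comm]

lemma monomialMatrix_krawtchoukTransform_mul_krawtchoukOp :
    monomialMatrix d (krawtchoukTransform (K := K) d) * monomialMatrix d (krawtchoukOp d) =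
      diagonal (fun i : Fin (d + 1) => (d : K) - 2 * i) *
        monomialMatrix d (krawtchoukTransform d) := by
  rw [monomialMatrix_mul fun i hi => natDegree_krawtchoukTransform_X_pow_le hi]
  ext i j
  have hi := Nat.lt_succ_iff.1 i.2
  simp [monomialMatrix, krawtchoukTransform_X_pow hi, krawtchoukOp_eigen hi, diagonal_mul]

lemma tridiagonal_monomialMatrix_krawtchoukOp :
    Tridiagonal (monomialMatrix d (krawtchoukOp (K := K) d)) := by
  intro i j hij
  have := lt_abs.1 hij
  rw [monomialMatrix, of_apply, coeff_krawtchoukOp_X_pow, if_neg (by omega), if_neg (by omega)]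

lemma monomialMatrix_krawtchoukOp_ne_zero (hcast : ∀ n : ℕ, 0 < n → n ≤ d → (n : K) ≠ 0)
    {i j : Fin (d + 1)} (hij : |((i : ℕ) : ℤ) - ((j : ℕ) : ℤ)| = 1) :
    monomialMatrix d (krawtchoukOp (K := K) d) i j ≠ 0 := by
  have hi := i.2
  have hj := j.2
  rw [monomialMatrix, of_apply, coeff_krawtchoukOp_X_pow]
  rcases abs_eq (zero_le_one' ℤ) |>.1 hij with h | h
  · rw [if_neg (by omega), if_pos (by omega)]
    exact hcast i (by omega) (by omega)
  · rw [if_pos (by omega), ← Nat.cast_sub (by omega)]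
    exact hcast _ (by omega) (by omega)

end Krawtchouk

lemma natCast_ne_zero_of_le_max_two {d n : ℕ}
    (hchar : CharZero K ∨ ∃ p, p.Prime ∧ Odd p ∧ d < p ∧ CharP K p) (hn : 0 < n)
    (hnd : n ≤ max d 2) : (n : K) ≠ 0 := by
  rcases hchar with _ | ⟨p, hp, hodd, hdp, _⟩
  · exact Nat.cast_ne_zero.2 hn.ne'
  · rw [Ne, CharP.cast_eq_zero_iff K p]
    intro hdvd
    have := Nat.le_of_dvd hn hdvd
    have := hp.two_le
    have := Nat.odd_iff.1 hodd
    omega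

lemma injective_natCast_sub_two_mul {d : ℕ}
    (hcast : ∀ n : ℕ, 0 < n → n ≤ max d 2 → (n : K) ≠ 0) :
    Function.Injective fun i : Fin (d + 1) => (d : K) - 2 * i := by
  intro i j hij
  wlog hle : (i : ℕ) ≤ j generalizing i j
  · exact (this hij.symm (by omega)).symm
  by_contra hne
  have hlt : (i : ℕ) < j := lt_of_le_of_ne hle (Fin.val_ne_of_ne hne)
  have h2 := hcast 2 two_pos (le_max_right d 2)
  refine hcast (j - i) (by omega) (by have := j.2; omega) ?_
  rw [Nat.cast_sub hle]
  refine (mul_eq_zero.1 ?_).resolve_left (by exact_mod_cast h2)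
  linear_combination hij

/-- the Krawtchouk example, a Leonard pair in TD-D canonical form. -/
theorem example_tdd_leonard_pair {d : ℕ}
    (hchar : CharZero K ∨ ∃ p, p.Prime ∧ Odd p ∧ d < p ∧ CharP K p)
    (A Astar : Matrix (Fin (d + 1)) (Fin (d + 1)) K)
    (hA : ∀ i j : Fin (d + 1), A i j =
      if (j : ℕ) = (i : ℕ) + 1 then (d : K) - ((i : ℕ) : K)
      else if (i : ℕ) = (j : ℕ) + 1 then ((i : ℕ) : K)
      else 0)
    (hAs : ∀ i j : Fin (d + 1), Astar i j =
      if (i : ℕ) = (j : ℕ) then (d : K) - 2 * ((i : ℕ) : K) else 0) :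
    IsLeonardPair A Astar ∧
    (∀ i : Fin (d + 1), ∑ j, A i j = (d : K)) ∧
    Tridiagonal A ∧ Astar.IsDiag ∧
    ∃ θ : Fin (d + 1) → K, IsEigenvalueSeq A Astar θ ∧
      (θ 0 = (d : K) ∨ θ (Fin.last d) = (d : K)) := by
  set θ : Fin (d + 1) → K := fun i => (d : K) - 2 * i
  set P := monomialMatrix d (krawtchoukTransform (K := K) d)
  have hcast : ∀ n : ℕ, 0 < n → n ≤ max d 2 → (n : K) ≠ 0 :=
    fun _ => natCast_ne_zero_of_le_max_two hchar
  have hA' : A = monomialMatrix d (krawtchoukOp d) := by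
    ext i j
    rw [hA, monomialMatrix, of_apply, coeff_krawtchoukOp_X_pow]
  have hAs' : Astar = diagonal θ := by
    ext i j
    simp [hAs, diagonal_apply, Fin.ext_iff, θ]
  have hPA : P * A = Astar * P := by
    rw [hA', hAs']
    exact monomialMatrix_krawtchoukTransform_mul_krawtchoukOp
  have h2d : (2 ^ d : K) ≠ 0 :=
    pow_ne_zero d (by exact_mod_cast hcast 2 two_pos (le_max_right d 2))
  have hPP : P * P = (2 ^ d : K) • 1 := monomialMatrix_krawtchoukTransform_mul_self
  have hTri : Tridiagonal A := hA' ▸ tridiagonal_monomialMatrix_krawtchoukOp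
  have hA_ne : ∀ i j : Fin (d + 1), |((i : ℕ) : ℤ) - ((j : ℕ) : ℤ)| = 1 → A i j ≠ 0 :=
    hA' ▸ fun _ _ => monomialMatrix_krawtchoukOp_ne_zero fun n hn hnd =>
      hcast n hn (le_max_of_le_left hnd)
  have hseqAs : IsEigenvalueSeq Astar A θ :=
    hAs' ▸ isEigenvalueSeq_diagonal (injective_natCast_sub_two_mul hcast) hTri hA_ne
  have hseqA : IsEigenvalueSeq A Astar θ := hseqAs.swap_of_intertwining h2d hPP hPA
  -- the column `P · 0` is all ones: every Krawtchouk polynomial has constant term `1`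
  have hrow (i : Fin (d + 1)) : ∑ j, A i j = d := by
    have := congr_fun (congr_fun (mul_eq_mul_of_mul_self_eq_smul_one h2d hPP hPA) i) 0
    rw [hAs', mul_diagonal, mul_apply] at this
    simpa [P, monomialMatrix_krawtchoukTransform_apply_zero, θ] using this
  exact ⟨⟨⟨θ, hseqA⟩, ⟨θ, hseqAs⟩⟩, hrow, hTri, hAs' ▸ isDiag_diagonal θ, θ, hseqA,
    Or.inl (by simp [θ])⟩
end
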